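/- arXiv:2410.21688 — 9 statements merged into one kernel-verified Lean document; each statement's English description precedes it below -/
import Mathlib

section
/- Let v_1, …, v_d ∈ ℝ^d be linearly independent vectors and let C = {α_1 v_1 + ⋯ + α_d v_d : α_1, …, α_d ≥ 0} be the simplicial cone they span. Then for every c ∈ ℝ^d with ⟨v_i, c⟩ > 0 for all i (equivalently, c in the interior of the dual cone C* = {u : ⟨u, w⟩ ≥ 0 for all w ∈ C}), one has ∫_C e^{−⟨v, c⟩} dλ(v) = |det(v_1, …, v_d)| / (⟨v_1, c⟩ ⟨v_2, c⟩ ⋯ ⟨v_d, c⟩). -/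
open MeasureTheory

lemma exp_indicator_integral {b : ℝ} (hb : 0 < b) :
    (∫ x : ℝ, Set.indicator (Set.Ici (0:ℝ)) (fun x => Real.exp (-(x * b))) x) = b⁻¹ := by
  rw [integral_indicator measurableSet_Ici, MeasureTheory.integral_Ici_eq_integral_Ioi]
  have := integral_comp_mul_right_Ioi (fun y => Real.exp (-y)) 0 hb
  simp only [zero_mul, smul_eq_mul] at this
  rw [this, integral_exp_neg_Ioi_zero, mul_one]

/-- exponential integral over a simplicial cone. -/
theorem simplicial_cone_exp_integral (d : ℕ) (v : Fin d → (Fin d → ℝ))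
    (hv : LinearIndependent ℝ v)
    (C : Set (Fin d → ℝ))
    (hC : C = {w | ∃ α : Fin d → ℝ, (∀ i, 0 ≤ α i) ∧ w = ∑ i, α i • v i})
    (c : Fin d → ℝ) (hc : ∀ i, 0 < ∑ j, v i j * c j) :
    (∫ w in C, Real.exp (-(∑ j, w j * c j))) =
      |(Matrix.of fun (i : Fin d) (j : Fin d) => v j i).det| / ∏ i, (∑ j, v i j * c j) := by
  classical
  set M : Matrix (Fin d) (Fin d) ℝ := Matrix.of fun i j => v j i with hMdef
  have hcols : LinearIndependent ℝ (fun i => M.transpose i) := by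
    convert hv using 2
    rfl
  have hUnit : IsUnit M := Matrix.linearIndependent_cols_iff_isUnit.mp hcols
  have hdet : M.det ≠ 0 := by
    have := hUnit.map Matrix.detMonoidHom
    simpa [isUnit_iff_ne_zero] using this
  set T : (Fin d → ℝ) →ₗ[ℝ] (Fin d → ℝ) := Matrix.toLin' M with hTdef
  have hTapp : ∀ α : Fin d → ℝ, T α = ∑ i, α i • v i := by
    intro α
    funext j
    simp only [hTdef, Matrix.toLin'_apply, Matrix.mulVec, dotProduct,
      Finset.sum_apply, Pi.smul_apply, smul_eq_mul, hMdef, Matrix.of_apply]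
    exact Finset.sum_congr rfl fun i _ => mul_comm _ _
  have hTinj : Function.Injective T := by
    have : Function.Injective (M.mulVec) := Matrix.mulVec_injective_iff_isUnit.mpr hUnit
    intro x y hxy
    apply this
    simpa [hTdef, Matrix.toLin'_apply] using hxy
  set S : Set (Fin d → ℝ) := {α | ∀ i, 0 ≤ α i} with hSdef
  have hCS : C = T '' S := by
    rw [hC]
    ext w
    constructor
    · rintro ⟨α, hα, rfl⟩
      exact ⟨α, hα, hTapp α⟩
    · rintro ⟨α, hα, rfl⟩
      exact ⟨α, hα, hTapp α⟩
  have hmap : Measure.map T volume = ENNReal.ofReal |M.det|⁻¹ • volume := by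
    simpa [abs_inv] using Real.map_matrix_volume_pi_eq_smul_volume_pi hdet
  have hvol : (volume : Measure (Fin d → ℝ)) = ENNReal.ofReal |M.det| • Measure.map T volume := by
    rw [hmap, smul_smul, ← ENNReal.ofReal_mul (abs_nonneg _),
      mul_inv_cancel₀ (abs_ne_zero.mpr hdet), ENNReal.ofReal_one, one_smul]
  have hemb : Topology.IsClosedEmbedding T :=
    LinearMap.isClosedEmbedding_of_injective (LinearMap.ker_eq_bot.mpr hTinj)
  have key : (∫ w in C, Real.exp (-(∑ j, w j * c j)))
      = |M.det| * ∫ α in S, Real.exp (-(∑ j, (T α) j * c j)) := by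
    conv_lhs => rw [hvol]
    rw [Measure.restrict_smul, integral_smul_measure,
      ENNReal.toReal_ofReal (abs_nonneg _), smul_eq_mul, hCS,
      hemb.setIntegral_map, Set.preimage_image_eq S hTinj]
  rw [key]
  set b : Fin d → ℝ := fun i => ∑ j, v i j * c j with hbdef
  have hsum : ∀ α : Fin d → ℝ, (∑ j, (T α) j * c j) = ∑ i, α i * b i := by
    intro α
    rw [hTapp]
    simp only [Finset.sum_apply, Pi.smul_apply, smul_eq_mul, Finset.sum_mul, hbdef,
      Finset.mul_sum]
    rw [Finset.sum_comm]
    refine Finset.sum_congr rfl fun i _ => Finset.sum_congr rfl fun j _ => by ring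
  have hSpi : S = Set.pi Set.univ (fun _ : Fin d => Set.Ici (0:ℝ)) := by
    ext α; simp [hSdef, Set.mem_pi]
    rfl
  have hinner : (∫ α in S, Real.exp (-(∑ j, (T α) j * c j))) = ∏ i, (b i)⁻¹ := by
    simp_rw [hsum]
    rw [hSpi, ← integral_indicator (MeasurableSet.univ_pi fun _ => measurableSet_Ici)]
    have : ∀ α : Fin d → ℝ,
        Set.indicator (Set.pi Set.univ (fun _ : Fin d => Set.Ici (0:ℝ)))
          (fun α => Real.exp (-(∑ i, α i * b i))) α
        = ∏ i, Set.indicator (Set.Ici (0:ℝ)) (fun x => Real.exp (-(x * b i))) (α i) := by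
      intro α
      by_cases hα : α ∈ Set.pi Set.univ (fun _ : Fin d => Set.Ici (0:ℝ))
      · rw [Set.indicator_of_mem hα]
        have : ∀ i ∈ Finset.univ, Set.indicator (Set.Ici (0:ℝ))
            (fun x => Real.exp (-(x * b i))) (α i) = Real.exp (-(α i * b i)) := fun i _ =>
          Set.indicator_of_mem (hα i (Set.mem_univ i)) _
        rw [Finset.prod_congr rfl this, ← Real.exp_sum]
        congr 1
        rw [← Finset.sum_neg_distrib]
      · rw [Set.indicator_of_notMem hα]
        simp only [Set.mem_pi, Set.mem_univ, forall_true_left, not_forall] at hα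
        obtain ⟨i, hi⟩ := hα
        refine (Finset.prod_eq_zero (Finset.mem_univ i) ?_).symm
        exact Set.indicator_of_notMem hi _
    simp_rw [this]
    rw [MeasureTheory.integral_fintype_prod_volume_eq_prod
      (f := fun i (x : ℝ) => Set.indicator (Set.Ici (0:ℝ)) (fun x => Real.exp (-(x * b i))) x)]
    exact Finset.prod_congr rfl fun i _ => exp_indicator_integral (hc i)
  rw [hinner]
  rw [div_eq_mul_inv, ← Finset.prod_inv_distrib]
end

section
/- Let P ⊆ ℝ^d be a polyhedron and let z be a point in the interior of P. Then ∫_{ℝ^d} exp( inf_{y ∈ P} ⟨v, y − z⟩ ) dλ(v) = d! · λ( (P − z)^∨ ), where the integrand is interpreted as 0 at points v where the infimum is −∞. (The integrand equals e^{−h_{P−z}(v)} for the support function h_{P−z}(v) = −inf_{y∈P}⟨v, y−z⟩, and the right-hand side is the normalized volume of the polar dual of P − z.) -/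
open MeasureTheory
open scoped Classical Pointwise

/-- A polyhedron: a nonempty intersection of finitely many closed halfspaces. -/
def IsPolyhedron {d : ℕ} (P : Set (Fin d → ℝ)) : Prop :=
  P.Nonempty ∧ ∃ (m : ℕ) (a : Fin m → (Fin d → ℝ)) (b : Fin m → ℝ),
    P = {x | ∀ i, (∑ j, a i j * x j) ≤ b i}

/-- The polar dual of a set. -/
def polarDual {d : ℕ} (S : Set (Fin d → ℝ)) : Set (Fin d → ℝ) :=
  {v | ∀ y ∈ S, (∑ i, v i * y i) ≥ -1}

private lemma lint_exp_Ici (a : ℝ) :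
    ∫⁻ x in Set.Ici a, ENNReal.ofReal (Real.exp (-x)) = ENNReal.ofReal (Real.exp (-a)) := by
  have h1 : (volume : Measure ℝ).restrict (Set.Ici a) = volume.restrict (Set.Ioi a) :=
    (Measure.restrict_congr_set (MeasureTheory.Ioi_ae_eq_Ici (a := a))).symm
  rw [h1]
  have hInt : IntegrableOn (fun x => Real.exp (-x)) (Set.Ioi a) := by
    have := exp_neg_integrableOn_Ioi a (b := 1) one_pos
    simpa using this
  rw [← ofReal_integral_eq_lintegral_ofReal hInt
    (Filter.Eventually.of_forall fun x => (Real.exp_pos _).le), integral_exp_neg_Ioi]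

/-- integral formula for the dual volume. -/
theorem dual_volume_integral (d : ℕ) (P : Set (Fin d → ℝ)) (hP : IsPolyhedron P)
    (z : Fin d → ℝ) (hz : z ∈ interior P) :
    (∫ v : Fin d → ℝ,
      if BddBelow ((fun y => ∑ i, v i * (y i - z i)) '' P)
      then Real.exp (sInf ((fun y => ∑ i, v i * (y i - z i)) '' P))
      else 0)
    = (d.factorial : ℝ) * (volume (polarDual ((fun y => y - z) '' P))).toReal := by
  classical
  have hzP : z ∈ P := interior_subset hz
  set φ : (Fin d → ℝ) → (Fin d → ℝ) → ℝ := fun v u => ∑ i, v i * u i with hφ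
  set Q : Set (Fin d → ℝ) := (fun y => y - z) '' P with hQdef
  have h0Q : (0 : Fin d → ℝ) ∈ Q := ⟨z, hzP, by simp⟩
  set D := polarDual Q with hDdef
  set E : Set (ℝ × (Fin d → ℝ)) := {p | ∀ y ∈ Q, -p.1 ≤ φ p.2 y} with hEdef
  -- the image set rewritten
  have hSv : ∀ v : Fin d → ℝ,
      ((fun y => ∑ i, v i * (y i - z i)) '' P) = φ v '' Q := by
    intro v
    rw [hQdef, Set.image_image]
    apply Set.image_congr
    intro y _
    simp [hφ, Pi.sub_apply]
  -- E is closed hence measurable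
  have hEclosed : IsClosed E := by
    have : E = ⋂ y ∈ Q, {p : ℝ × (Fin d → ℝ) | -p.1 ≤ φ p.2 y} := by
      ext p; simp [hEdef, Set.mem_iInter]
    rw [this]
    refine isClosed_biInter fun y _ => ?_
    have hc : Continuous fun p : ℝ × (Fin d → ℝ) => φ p.2 y + p.1 := by
      apply Continuous.add ?_ continuous_fst
      exact continuous_finset_sum _ fun i _ =>
        (((continuous_apply i).comp continuous_snd).mul continuous_const)
    have : {p : ℝ × (Fin d → ℝ) | -p.1 ≤ φ p.2 y}
        = {p : ℝ × (Fin d → ℝ) | 0 ≤ φ p.2 y + p.1} := by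
      ext p; simp [neg_le_iff_add_nonneg, add_comm]
    rw [this]
    exact isClosed_le continuous_const hc
  have hEmeas : MeasurableSet E := hEclosed.measurableSet
  -- the indicator kernel
  set K : ℝ × (Fin d → ℝ) → ENNReal :=
    E.indicator (fun p => ENNReal.ofReal (Real.exp (-p.1))) with hKdef
  have hKmeas : Measurable K := by
    apply Measurable.indicator ?_ hEmeas
    exact (ENNReal.measurable_ofReal.comp
      (Real.continuous_exp.measurable.comp measurable_fst.neg))
  -- pointwise layer-cake identity
  have hpoint : ∀ v : Fin d → ℝ,
      ENNReal.ofReal (if BddBelow ((fun y => ∑ i, v i * (y i - z i)) '' P)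
        then Real.exp (sInf ((fun y => ∑ i, v i * (y i - z i)) '' P)) else 0)
      = ∫⁻ x in Set.Ioi (0:ℝ), K (x, v) := by
    intro v
    rw [hSv v]
    by_cases hb : BddBelow (φ v '' Q)
    · rw [if_pos hb]
      set c := sInf (φ v '' Q) with hc
      have hne : (φ v '' Q).Nonempty := ⟨φ v 0, Set.mem_image_of_mem _ h0Q⟩
      have hc0 : c ≤ 0 := by
        have : φ v 0 = 0 := by simp [hφ]
        calc c ≤ φ v 0 := csInf_le hb (Set.mem_image_of_mem _ h0Q)
        _ = 0 := this
      have hmem : ∀ x : ℝ, ((x, v) ∈ E ↔ -c ≤ x) := by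
        intro x
        constructor
        · intro hxE
          have : -x ≤ c := le_csInf hne (by rintro s ⟨y, hy, rfl⟩; exact hxE y hy)
          linarith
        · intro hx y hy
          have : c ≤ φ v y := csInf_le hb (Set.mem_image_of_mem _ hy)
          have : -x ≤ c := by linarith
          linarith [csInf_le hb (Set.mem_image_of_mem (φ v) hy)]
      have hKx : ∀ x : ℝ, K (x, v)
          = (Set.Ici (-c)).indicator (fun x => ENNReal.ofReal (Real.exp (-x))) x := by
        intro x
        rw [hKdef]
        by_cases hx : -c ≤ x
        · rw [Set.indicator_of_mem ((hmem x).2 hx)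
            (fun p => ENNReal.ofReal (Real.exp (-p.1)))]
          exact (Set.indicator_of_mem (Set.mem_Ici.2 hx)
            (fun x => ENNReal.ofReal (Real.exp (-x)))).symm
        · rw [Set.indicator_of_notMem (show (x, v) ∉ E from fun h => hx ((hmem x).1 h))
            (fun p => ENNReal.ofReal (Real.exp (-p.1)))]
          exact (Set.indicator_of_notMem (show x ∉ Set.Ici (-c) from fun h => hx h)
            (fun x => ENNReal.ofReal (Real.exp (-x)))).symm
      calc ENNReal.ofReal (Real.exp c)
          = ∫⁻ x in Set.Ici (-c), ENNReal.ofReal (Real.exp (-x)) := by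
            rw [lint_exp_Ici, neg_neg]
        _ = ∫⁻ x in Set.Ioi (0:ℝ), K (x, v) := by
            have hres : (volume : Measure ℝ).restrict (Set.Ici (-c))
                = volume.restrict (Set.Ici (-c) ∩ Set.Ioi 0) := by
              apply (Measure.restrict_congr_set _).symm
              rw [MeasureTheory.ae_eq_set]
              refine ⟨by simp [Set.diff_eq_empty.2 Set.inter_subset_left], ?_⟩
              refine measure_mono_null ?_ (measure_singleton (0:ℝ))
              intro x hx
              simp only [Set.mem_diff, Set.mem_inter_iff, Set.mem_Ici, Set.mem_Ioi,
                not_and, Set.mem_singleton_iff] at hx ⊢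
              obtain ⟨h1, h3⟩ := hx
              have h4 : ¬ (0:ℝ) < x := fun h => h3 h1 h
              have h5 : x ≤ 0 := not_lt.1 h4
              linarith
            rw [hres, ← Measure.restrict_restrict measurableSet_Ici,
              ← lintegral_indicator measurableSet_Ici]
            exact lintegral_congr fun x => (hKx x).symm
    · rw [if_neg hb]
      have hnot : ∀ x : ℝ, (x, v) ∉ E := by
        intro x hxE
        exact hb ⟨-x, by rintro s ⟨y, hy, rfl⟩; exact hxE y hy⟩
      have : ∀ x : ℝ, K (x, v) = 0 := by
        intro x; rw [hKdef]; exact Set.indicator_of_notMem (hnot x) _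
      simp [this]
  -- measurability of the integrand
  set F : (Fin d → ℝ) → ENNReal := fun v => ∫⁻ x in Set.Ioi (0:ℝ), K (x, v) with hFdef
  have hFmeas : Measurable F := by
    apply Measurable.lintegral_prod_left
    exact hKmeas
  set g : (Fin d → ℝ) → ℝ := fun v =>
    if BddBelow ((fun y => ∑ i, v i * (y i - z i)) '' P)
    then Real.exp (sInf ((fun y => ∑ i, v i * (y i - z i)) '' P)) else 0 with hgdef
  have hg_nonneg : ∀ v, 0 ≤ g v := by
    intro v; simp only [hgdef]
    split
    · exact (Real.exp_pos _).le
    · exact le_rfl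
  have hg_eq : ∀ v, g v = (F v).toReal := by
    intro v
    simp only [hFdef, hgdef]
    rw [← hpoint v]
    exact (ENNReal.toReal_ofReal (hg_nonneg v)).symm
  have hg_meas : Measurable g := by
    have : g = fun v => (F v).toReal := funext hg_eq
    rw [this]
    exact hFmeas.ennreal_toReal
  -- rewrite the Bochner integral as a lintegral
  rw [show (∫ v : Fin d → ℝ,
      if BddBelow ((fun y => ∑ i, v i * (y i - z i)) '' P)
      then Real.exp (sInf ((fun y => ∑ i, v i * (y i - z i)) '' P))
      else 0) = ∫ v, g v from rfl]
  rw [integral_eq_lintegral_of_nonneg_ae (Filter.Eventually.of_forall hg_nonneg)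
    hg_meas.aestronglyMeasurable]
  have hlhs : ∫⁻ v, ENNReal.ofReal (g v) = ∫⁻ v, F v := lintegral_congr fun v => hpoint v
  rw [hlhs]
  -- Tonelli
  have hswap : ∫⁻ v, F v = ∫⁻ x in Set.Ioi (0:ℝ), ∫⁻ v, K (x, v) := by
    rw [hFdef]
    exact lintegral_lintegral_swap ((hKmeas.comp measurable_swap).aemeasurable)
  rw [hswap]
  -- slice computation
  have hslice : ∀ x : ℝ, 0 < x →
      (∫⁻ v, K (x, v)) = ENNReal.ofReal (Real.exp (-x) * x ^ d) * volume D := by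
    intro x hx
    have hsliceset : {v : Fin d → ℝ | (x, v) ∈ E} = x • D := by
      ext v
      simp only [Set.mem_setOf_eq, hEdef]
      constructor
      · intro h
        rw [Set.mem_smul_set]
        refine ⟨x⁻¹ • v, fun y hy => ?_, by rw [smul_inv_smul₀ hx.ne']⟩
        have h1 : -x ≤ φ v y := h y hy
        have h2 : (∑ i, (x⁻¹ • v) i * y i) = x⁻¹ * φ v y := by
          simp [hφ, Finset.mul_sum, mul_assoc]
        rw [ge_iff_le, h2]
        rw [show (-1 : ℝ) = x⁻¹ * (-x) by field_simp]
        exact mul_le_mul_of_nonneg_left h1 (inv_nonneg.2 hx.le)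
      · rw [Set.mem_smul_set]
        rintro ⟨w, hw, rfl⟩ y hy
        have h1 : (-1 : ℝ) ≤ ∑ i, w i * y i := hw y hy
        have h2 : φ (x • w) y = x * ∑ i, w i * y i := by
          simp [hφ, Finset.mul_sum, mul_assoc]
        rw [h2]
        nlinarith
    have hmeas_slice : MeasurableSet {v : Fin d → ℝ | (x, v) ∈ E} :=
      hEmeas.preimage (measurable_prodMk_left)
    calc (∫⁻ v, K (x, v))
        = ∫⁻ v, {v : Fin d → ℝ | (x, v) ∈ E}.indicator
            (fun _ => ENNReal.ofReal (Real.exp (-x))) v := by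
          apply lintegral_congr
          intro v
          by_cases hv : (x, v) ∈ E
          · rw [hKdef, Set.indicator_of_mem hv]
            exact (Set.indicator_of_mem (show v ∈ {v | (x, v) ∈ E} from hv)
              (fun _ => ENNReal.ofReal (Real.exp (-x)))).symm
          · rw [hKdef, Set.indicator_of_notMem hv]
            exact (Set.indicator_of_notMem (show v ∉ {v | (x, v) ∈ E} from hv)
              (fun _ => ENNReal.ofReal (Real.exp (-x)))).symm
      _ = ENNReal.ofReal (Real.exp (-x)) * volume {v : Fin d → ℝ | (x, v) ∈ E} := by
          rw [lintegral_indicator hmeas_slice, setLIntegral_const]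
      _ = ENNReal.ofReal (Real.exp (-x) * x ^ d) * volume D := by
          rw [hsliceset, Measure.addHaar_smul, Module.finrank_fin_fun,
            abs_of_nonneg (pow_nonneg hx.le d),
            ENNReal.ofReal_mul (Real.exp_pos _).le, mul_assoc]
  have hcongr : ∫⁻ x in Set.Ioi (0:ℝ), ∫⁻ v, K (x, v)
      = ∫⁻ x in Set.Ioi (0:ℝ), ENNReal.ofReal (Real.exp (-x) * x ^ d) * volume D := by
    apply setLIntegral_congr_fun measurableSet_Ioi
    exact fun x hx => hslice x hx
  rw [hcongr]
  -- pull out the constant and compute the Gamma integral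
  have hgamma : ∫⁻ x in Set.Ioi (0:ℝ), ENNReal.ofReal (Real.exp (-x) * x ^ d)
      = ENNReal.ofReal (d.factorial : ℝ) := by
    have h1 : ∫⁻ x in Set.Ioi (0:ℝ), ENNReal.ofReal (Real.exp (-x) * x ^ d)
        = ∫⁻ x in Set.Ioi (0:ℝ),
            ENNReal.ofReal (Real.exp (-x) * x ^ ((d:ℝ) + 1 - 1)) := by
      apply setLIntegral_congr_fun measurableSet_Ioi
      intro x hx
      beta_reduce
      rw [show ((d:ℝ) + 1 - 1) = (d:ℝ) by ring, Real.rpow_natCast]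
    have hs : (0:ℝ) < (d:ℝ) + 1 := by positivity
    have hInt := Real.GammaIntegral_convergent hs
    have hnn : 0 ≤ᵐ[volume.restrict (Set.Ioi (0:ℝ))]
        fun x => Real.exp (-x) * x ^ ((d:ℝ) + 1 - 1) := by
      rw [Filter.EventuallyLE, ae_restrict_iff' measurableSet_Ioi]
      apply Filter.Eventually.of_forall
      intro x hx
      have : (0:ℝ) < x := hx
      positivity
    rw [h1, ← ofReal_integral_eq_lintegral_ofReal hInt hnn,
      ← Real.Gamma_eq_integral hs, Real.Gamma_nat_eq_factorial]
  rw [lintegral_mul_const _ (by fun_prop), hgamma]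
  rw [ENNReal.toReal_mul, ENNReal.toReal_ofReal (by positivity)]
end

section
/- (Dual Brunn–Minkowski inequality.) Let P, Q ⊆ ℝ^d be polytopes, each containing the origin in its interior. Let (P + Q)/2 := { (p + q)/2 : p ∈ P, q ∈ Q }. Then λ( ((P + Q)/2)^∨ )^2 ≤ λ( P^∨ ) · λ( Q^∨ ). -/
open MeasureTheory Set Real Pointwise

namespace DBM

variable {d : ℕ}

noncomputable def pg (s : Finset (Fin d → ℝ)) (hs : s.Nonempty) (v : Fin d → ℝ) : ℝ :=
  s.sup' hs fun p => -(∑ i, v i * p i)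

lemma le_pg (s : Finset (Fin d → ℝ)) (hs : s.Nonempty) (v : Fin d → ℝ) {y : Fin d → ℝ}
    (hy : y ∈ convexHull ℝ (↑s : Set (Fin d → ℝ))) :
    -(∑ i, v i * y i) ≤ pg s hs v := by
  have hlin : IsLinearMap ℝ (fun y : Fin d → ℝ => -(∑ i, v i * y i)) := by
    constructor
    · intro a b
      simp [mul_add, Finset.sum_add_distrib]; ring
    · intro c a
      simp only [Pi.smul_apply, smul_eq_mul, mul_neg, neg_inj, Finset.mul_sum]
      exact Finset.sum_congr rfl fun i _ => by ring
  have hconv : Convex ℝ {y : Fin d → ℝ | -(∑ i, v i * y i) ≤ pg s hs v} :=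
    convex_halfSpace_le hlin _
  have hsub : (↑s : Set (Fin d → ℝ)) ⊆ {y : Fin d → ℝ | -(∑ i, v i * y i) ≤ pg s hs v} := by
    intro p hp
    exact Finset.le_sup' (fun q : Fin d → ℝ => -(∑ i, v i * q i)) (by exact_mod_cast hp)
  exact convexHull_min hsub hconv hy

lemma pg_nonneg (s : Finset (Fin d → ℝ)) (hs : s.Nonempty)
    (h0 : (0 : Fin d → ℝ) ∈ convexHull ℝ (↑s : Set (Fin d → ℝ))) (v : Fin d → ℝ) :
    0 ≤ pg s hs v := by
  have := le_pg s hs v h0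
  simpa using this

lemma pg_smul (s : Finset (Fin d → ℝ)) (hs : s.Nonempty) {c : ℝ} (hc : 0 ≤ c) (v : Fin d → ℝ) :
    pg s hs (c • v) = c * pg s hs v := by
  unfold pg
  rw [Finset.comp_sup'_eq_sup'_comp hs (fun x : ℝ => c * x) (fun x y => (mul_max_of_nonneg x y hc))]
  congr 1
  funext p
  simp [Finset.mul_sum, mul_comm, mul_assoc, mul_left_comm]

lemma pg_continuous (s : Finset (Fin d → ℝ)) (hs : s.Nonempty) :
    Continuous (pg s hs) := by
  unfold pg
  exact Continuous.finset_sup'_apply (f := fun (p v : Fin d → ℝ) => -(∑ i, v i * p i)) hs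
    (fun p _ => (continuous_finset_sum _ fun i _ => (continuous_apply i).mul continuous_const).neg)

lemma polarDual_hull (s : Finset (Fin d → ℝ)) (hs : s.Nonempty) :
    polarDual (convexHull ℝ (↑s : Set (Fin d → ℝ))) = {v | pg s hs v ≤ 1} := by
  ext v
  constructor
  · intro hv
    show pg s hs v ≤ 1
    unfold pg
    refine Finset.sup'_le hs _ fun p hp => ?_
    have := hv p (subset_convexHull ℝ _ (by exact_mod_cast hp))
    linarith
  · intro hv y hy
    have h2 : pg s hs v ≤ 1 := hv
    have := (le_pg s hs v hy).trans h2
    show ∑ i, v i * y i ≥ -1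
    linarith


lemma polarDual_avg (s t : Finset (Fin d → ℝ)) (hs : s.Nonempty) (ht : t.Nonempty) :
    polarDual {w | ∃ p ∈ convexHull ℝ (↑s : Set (Fin d → ℝ)),
        ∃ q ∈ convexHull ℝ (↑t : Set (Fin d → ℝ)), w = (2⁻¹ : ℝ) • (p + q)}
      = {v | pg s hs v + pg t ht v ≤ 2} := by
  ext v
  have key : ∀ p q : Fin d → ℝ, (∑ i, v i * ((2⁻¹ : ℝ) • (p + q)) i)
      = 2⁻¹ * ((∑ i, v i * p i) + (∑ i, v i * q i)) := by
    intro p q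
    rw [mul_add, Finset.mul_sum, Finset.mul_sum, ← Finset.sum_add_distrib]
    refine Finset.sum_congr rfl fun i _ => ?_
    simp only [Pi.smul_apply, Pi.add_apply, smul_eq_mul]
    ring
  constructor
  · intro hv
    obtain ⟨p0, hp0, hps⟩ := Finset.exists_mem_eq_sup' hs (fun q : Fin d → ℝ => -(∑ i, v i * q i))
    obtain ⟨q0, hq0, hqs⟩ := Finset.exists_mem_eq_sup' ht (fun q : Fin d → ℝ => -(∑ i, v i * q i))
    have h1 := hv _ ⟨p0, subset_convexHull ℝ _ (by exact_mod_cast hp0), q0,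
      subset_convexHull ℝ _ (by exact_mod_cast hq0), rfl⟩
    rw [ge_iff_le, key] at h1
    show pg s hs v + pg t ht v ≤ 2
    rw [pg, pg, hps, hqs]
    linarith
  · intro hv w hw
    obtain ⟨p, hp, q, hq, rfl⟩ := hw
    have h2 : pg s hs v + pg t ht v ≤ 2 := hv
    have hbp := le_pg s hs v hp
    have hbq := le_pg t ht v hq
    show ∑ i, v i * ((2⁻¹ : ℝ) • (p + q)) i ≥ -1
    rw [ge_iff_le, key]
    linarith

lemma vol_sublevel (G : (Fin d → ℝ) → ℝ)
    (hGh : ∀ c : ℝ, 0 < c → ∀ v, G (c • v) = c * G v) {r : ℝ} (hr : 0 < r) :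
    volume {v | G v ≤ r} = ENNReal.ofReal (r ^ d) * volume {v | G v ≤ 1} := by
  have hset : {v | G v ≤ r} = r • {v : Fin d → ℝ | G v ≤ 1} := by
    ext x
    rw [Set.mem_smul_set_iff_inv_smul_mem₀ (ne_of_gt hr)]
    simp only [Set.mem_setOf_eq]
    rw [hGh r⁻¹ (by positivity) x]
    rw [inv_mul_le_iff₀ hr, mul_one]
  rw [hset, Measure.addHaar_smul_of_nonneg volume hr.le, Module.finrank_fin_fun]

open ENNReal in
lemma lintegral_exp_neg_gauge (G : (Fin d → ℝ) → ℝ) (hGm : Measurable G)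
    (hG0 : ∀ v, 0 ≤ G v) (hGh : ∀ c : ℝ, 0 < c → ∀ v, G (c • v) = c * G v) :
    ∫⁻ v, ENNReal.ofReal (Real.exp (-(G v)))
      = ENNReal.ofReal (Nat.factorial d) * volume {v | G v ≤ 1} := by
  set S : Set ((Fin d → ℝ) × ℝ) := {p | G p.1 ≤ p.2} with hS
  set f : (Fin d → ℝ) → ℝ → ℝ≥0∞ := fun v t =>
    (S.indicator (1 : ((Fin d → ℝ) × ℝ) → ℝ≥0∞) (v, t)) * ENNReal.ofReal (Real.exp (-t)) with hf
  have hSm : MeasurableSet S := measurableSet_le (hGm.comp measurable_fst) measurable_snd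
  have hfm : Measurable (Function.uncurry f) := by
    apply Measurable.mul
    · exact measurable_one.indicator hSm
    · exact (ENNReal.measurable_ofReal.comp
        (Real.continuous_exp.measurable.comp measurable_neg)).comp measurable_snd
  have hA : ∀ v, (∫⁻ t in Ioi (0 : ℝ), f v t) = ENNReal.ofReal (Real.exp (-(G v))) := by
    intro v
    have h1 : ∀ t : ℝ, f v t = (Ici (G v)).indicator
        (fun t => ENNReal.ofReal (Real.exp (-t))) t := by
      intro t
      simp only [hf, hS, Set.indicator]
      by_cases h : G v ≤ t <;> simp [h]
    simp_rw [h1]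
    rw [lintegral_indicator measurableSet_Ici, Measure.restrict_restrict measurableSet_Ici]
    have hae : (Ici (G v) ∩ Ioi (0 : ℝ) : Set ℝ) =ᵐ[volume] Ioi (G v) := by
      rw [Filter.eventuallyEq_set]
      have h0 : ∀ᵐ t : ℝ ∂(volume : Measure ℝ), t ≠ G v := by
        rw [ae_iff]
        simp [not_not, Set.setOf_eq_eq_singleton, Real.volume_singleton]
      filter_upwards [h0] with t ht
      constructor
      · rintro ⟨h1, h2⟩
        exact lt_of_le_of_ne h1 (Ne.symm ht)
      · intro h1
        exact ⟨(Set.mem_Ioi.mp h1).le, Set.mem_Ioi.mpr (lt_of_le_of_lt (hG0 v) (Set.mem_Ioi.mp h1))⟩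
    rw [Measure.restrict_congr_set hae]
    rw [← ofReal_integral_eq_lintegral_ofReal]
    · rw [integral_exp_neg_Ioi]
    · have := exp_neg_integrableOn_Ioi (G v) (by norm_num : (0:ℝ) < 1)
      exact (by simpa [neg_one_mul] using this : IntegrableOn (fun x => rexp (-x)) (Ioi (G v)))
    · filter_upwards with t using (Real.exp_pos _).le
  have hK : MeasurableSet {v : Fin d → ℝ | G v ≤ 1} := hGm measurableSet_Iic
  have hgamma : (∫⁻ t in Ioi (0 : ℝ), ENNReal.ofReal (Real.exp (-t) * t ^ d))
      = ENNReal.ofReal (Nat.factorial d) := by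
    have heq : (fun x : ℝ => Real.exp (-x) * x ^ ((d : ℝ) + 1 - 1))
        = fun x : ℝ => Real.exp (-x) * x ^ d := by
      funext x
      rw [add_sub_cancel_right, Real.rpow_natCast]
    have hconv := Real.GammaIntegral_convergent (s := (d : ℝ) + 1) (by positivity)
    rw [heq] at hconv
    rw [← ofReal_integral_eq_lintegral_ofReal hconv]
    · congr 1
      have hg := Real.Gamma_eq_integral (s := (d : ℝ) + 1) (by positivity)
      rw [heq] at hg
      rw [← hg]
      exact_mod_cast Real.Gamma_nat_eq_factorial d
    · filter_upwards [ae_restrict_mem measurableSet_Ioi] with t ht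
      have : (0:ℝ) < t := ht
      positivity
  calc ∫⁻ v, ENNReal.ofReal (Real.exp (-(G v)))
      = ∫⁻ v, ∫⁻ t in Ioi (0 : ℝ), f v t := by simp_rw [hA]
    _ = ∫⁻ t in Ioi (0 : ℝ), ∫⁻ v, f v t := lintegral_lintegral_swap hfm.aemeasurable
    _ = ∫⁻ t in Ioi (0 : ℝ), ENNReal.ofReal (Real.exp (-t) * t ^ d)
          * volume {v : Fin d → ℝ | G v ≤ 1} := by
        refine setLIntegral_congr_fun measurableSet_Ioi ?_
        intro t ht
        have h2 : ∀ v : Fin d → ℝ, f v t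
            = {v : Fin d → ℝ | G v ≤ t}.indicator (1 : (Fin d → ℝ) → ℝ≥0∞) v
              * ENNReal.ofReal (Real.exp (-t)) := by
          intro v
          simp only [hf, hS, Set.indicator]
          by_cases h : G v ≤ t <;> simp [h]
        simp_rw [h2]
        have hmset : MeasurableSet {v : Fin d → ℝ | G v ≤ t} := hGm measurableSet_Iic
        rw [lintegral_mul_const _ (measurable_one.indicator hmset),
          lintegral_indicator_one hmset]
        rw [vol_sublevel G hGh ht]
        rw [ENNReal.ofReal_mul (Real.exp_pos _).le]
        ring
    _ = (∫⁻ t in Ioi (0 : ℝ), ENNReal.ofReal (Real.exp (-t) * t ^ d))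
          * volume {v : Fin d → ℝ | G v ≤ 1} := by
        rw [lintegral_mul_const]
        exact ENNReal.measurable_ofReal.comp
          ((Real.continuous_exp.measurable.comp measurable_neg).mul (measurable_id.pow_const d))
    _ = ENNReal.ofReal (Nat.factorial d) * volume {v : Fin d → ℝ | G v ≤ 1} := by
        rw [hgamma]

end DBM


open ENNReal in
/-- dual Brunn–Minkowski inequality for polytopes containing the
origin in their interior. -/
theorem dual_brunn_minkowski (d : ℕ) (P Q : Set (Fin d → ℝ))
    (hP : ∃ s : Finset (Fin d → ℝ), P = convexHull ℝ (↑s : Set (Fin d → ℝ)))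
    (hQ : ∃ s : Finset (Fin d → ℝ), Q = convexHull ℝ (↑s : Set (Fin d → ℝ)))
    (hP0 : (0 : Fin d → ℝ) ∈ interior P) (hQ0 : (0 : Fin d → ℝ) ∈ interior Q) :
    (volume (polarDual {w | ∃ p ∈ P, ∃ q ∈ Q, w = (2⁻¹ : ℝ) • (p + q)})) ^ 2
      ≤ volume (polarDual P) * volume (polarDual Q) := by
  obtain ⟨s, rfl⟩ := hP
  obtain ⟨t, rfl⟩ := hQ
  have h0P : (0 : Fin d → ℝ) ∈ convexHull ℝ (↑s : Set (Fin d → ℝ)) := interior_subset hP0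
  have h0Q : (0 : Fin d → ℝ) ∈ convexHull ℝ (↑t : Set (Fin d → ℝ)) := interior_subset hQ0
  have hs : s.Nonempty := Finset.coe_nonempty.mp (convexHull_nonempty_iff.mp ⟨0, h0P⟩)
  have ht : t.Nonempty := Finset.coe_nonempty.mp (convexHull_nonempty_iff.mp ⟨0, h0Q⟩)
  set c : ℝ≥0∞ := ENNReal.ofReal (Nat.factorial d) with hc
  have hc0 : c ≠ 0 := (ENNReal.ofReal_pos.mpr (by exact_mod_cast Nat.factorial_pos d)).ne'
  have hctop : c ≠ ⊤ := ENNReal.ofReal_ne_top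
  -- the three gauge integrals
  have hIP : (∫⁻ v, ENNReal.ofReal (Real.exp (-(DBM.pg s hs v))))
      = c * volume (polarDual (convexHull ℝ (↑s : Set (Fin d → ℝ)))) := by
    rw [DBM.lintegral_exp_neg_gauge _ (DBM.pg_continuous s hs).measurable
      (DBM.pg_nonneg s hs h0P) (fun c hc v => DBM.pg_smul s hs hc.le v),
      DBM.polarDual_hull s hs]
  have hIQ : (∫⁻ v, ENNReal.ofReal (Real.exp (-(DBM.pg t ht v))))
      = c * volume (polarDual (convexHull ℝ (↑t : Set (Fin d → ℝ)))) := by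
    rw [DBM.lintegral_exp_neg_gauge _ (DBM.pg_continuous t ht).measurable
      (DBM.pg_nonneg t ht h0Q) (fun c hc v => DBM.pg_smul t ht hc.le v),
      DBM.polarDual_hull t ht]
  set G : (Fin d → ℝ) → ℝ := fun v => 2⁻¹ * (DBM.pg s hs v + DBM.pg t ht v) with hG
  have hGm : Measurable G :=
    (continuous_const.mul ((DBM.pg_continuous s hs).add (DBM.pg_continuous t ht))).measurable
  have hIR : (∫⁻ v, ENNReal.ofReal (Real.exp (-(G v))))
      = c * volume (polarDual {w | ∃ p ∈ convexHull ℝ (↑s : Set (Fin d → ℝ)),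
          ∃ q ∈ convexHull ℝ (↑t : Set (Fin d → ℝ)), w = (2⁻¹ : ℝ) • (p + q)}) := by
    rw [DBM.lintegral_exp_neg_gauge G hGm
      (fun v => by
        have := DBM.pg_nonneg s hs h0P v
        have := DBM.pg_nonneg t ht h0Q v
        simp only [hG]; positivity)
      (fun r hr v => by
        simp only [hG, DBM.pg_smul s hs hr.le, DBM.pg_smul t ht hr.le]; ring),
      DBM.polarDual_avg s t hs ht]
    congr 2
    ext v
    simp only [hG, Set.mem_setOf_eq]
    constructor <;> intro h <;> linarith
  -- Hölder / Cauchy–Schwarz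
  set F1 : (Fin d → ℝ) → ℝ≥0∞ := fun v => ENNReal.ofReal (Real.exp (-(2⁻¹ * DBM.pg s hs v)))
    with hF1
  set F2 : (Fin d → ℝ) → ℝ≥0∞ := fun v => ENNReal.ofReal (Real.exp (-(2⁻¹ * DBM.pg t ht v)))
    with hF2
  have hF1m : Measurable F1 := ENNReal.measurable_ofReal.comp
    (Real.continuous_exp.comp ((continuous_const.mul (DBM.pg_continuous s hs)).neg)).measurable
  have hF2m : Measurable F2 := ENNReal.measurable_ofReal.comp
    (Real.continuous_exp.comp ((continuous_const.mul (DBM.pg_continuous t ht)).neg)).measurable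
  have hpq : (2:ℝ).HolderConjugate 2 := Real.holderConjugate_iff.mpr ⟨one_lt_two, by norm_num⟩
  have hH := ENNReal.lintegral_mul_le_Lp_mul_Lq volume hpq hF1m.aemeasurable hF2m.aemeasurable
  have hmul : ∀ v, (F1 * F2) v = ENNReal.ofReal (Real.exp (-(G v))) := by
    intro v
    simp only [Pi.mul_apply, hF1, hF2, hG]
    rw [← ENNReal.ofReal_mul (Real.exp_pos _).le, ← Real.exp_add]
    congr 1
    ring
  have hsq1 : ∀ v, F1 v ^ (2:ℝ) = ENNReal.ofReal (Real.exp (-(DBM.pg s hs v))) := by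
    intro v
    rw [show (2:ℝ) = ((2:ℕ):ℝ) by norm_num, ENNReal.rpow_natCast, pow_two,
      ← ENNReal.ofReal_mul (Real.exp_pos _).le, ← Real.exp_add]
    congr 1
    ring
  have hsq2 : ∀ v, F2 v ^ (2:ℝ) = ENNReal.ofReal (Real.exp (-(DBM.pg t ht v))) := by
    intro v
    rw [show (2:ℝ) = ((2:ℕ):ℝ) by norm_num, ENNReal.rpow_natCast, pow_two,
      ← ENNReal.ofReal_mul (Real.exp_pos _).le, ← Real.exp_add]
    congr 1
    ring
  simp_rw [hmul, hsq1, hsq2, hIP, hIQ, hIR] at hH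
  -- square both sides
  have hrhs : ∀ x y : ℝ≥0∞, (x ^ (1/(2:ℝ)) * y ^ (1/(2:ℝ))) ^ (2:ℕ) = x * y := by
    intro x y
    rw [mul_pow, ← ENNReal.rpow_natCast (x ^ (1/(2:ℝ))) 2,
      ← ENNReal.rpow_natCast (y ^ (1/(2:ℝ))) 2, ← ENNReal.rpow_mul, ← ENNReal.rpow_mul]
    norm_num
  have hH2 := pow_le_pow_left' hH 2
  rw [hrhs, mul_pow, mul_mul_mul_comm, ← pow_two] at hH2
  exact (ENNReal.mul_le_mul_iff_right (pow_ne_zero 2 hc0)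
    (ENNReal.pow_ne_top hctop)).mp hH2
end

section
/- Let n ≥ 1. The indicator function of any polyhedral cone C ⊆ ℝ^n lies in the ℝ-linear span, inside the vector space of functions ℝ^n → ℝ, of the set {1_{C'} : C' ⊆ ℝ^n a polyhedral cone contained in the closed halfspace {x ∈ ℝ^n : x_1 ≥ 0}} together with the set {1_{C'} : C' ⊆ ℝ^n a polyhedral cone containing a line}. -/
/-- A polyhedral cone: all nonnegative combinations of a finite set of vectors. -/
def IsPolyhedralCone {n : ℕ} (C : Set (Fin n → ℝ)) : Prop :=
  ∃ (m : ℕ) (v : Fin m → (Fin n → ℝ)),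
    C = {x | ∃ α : Fin m → ℝ, (∀ i, 0 ≤ α i) ∧ x = ∑ i, α i • v i}

namespace ConeSpanAux

variable {n : ℕ}

def coneOf {m : ℕ} (v : Fin m → Fin n → ℝ) : Set (Fin n → ℝ) :=
  {x | ∃ α : Fin m → ℝ, (∀ i, 0 ≤ α i) ∧ x = ∑ i, α i • v i}

lemma isPolyhedralCone_coneOf {m : ℕ} (v : Fin m → Fin n → ℝ) :
    IsPolyhedralCone (coneOf v) := ⟨m, v, rfl⟩

lemma zero_mem {m : ℕ} (v : Fin m → Fin n → ℝ) : (0 : Fin n → ℝ) ∈ coneOf v :=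
  ⟨0, fun _ => le_refl 0, by simp⟩

lemma add_mem' {m : ℕ} {v : Fin m → Fin n → ℝ} {x y : Fin n → ℝ}
    (hx : x ∈ coneOf v) (hy : y ∈ coneOf v) : x + y ∈ coneOf v := by
  obtain ⟨α, hα, rfl⟩ := hx; obtain ⟨β, hβ, rfl⟩ := hy
  exact ⟨α + β, fun i => add_nonneg (hα i) (hβ i), by
    simp [add_smul, Finset.sum_add_distrib]⟩

lemma smul_mem' {m : ℕ} {v : Fin m → Fin n → ℝ} {x : Fin n → ℝ}
    (t : ℝ) (ht : 0 ≤ t) (hx : x ∈ coneOf v) : t • x ∈ coneOf v := by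
  obtain ⟨α, hα, rfl⟩ := hx
  exact ⟨t • α, fun i => mul_nonneg ht (hα i), by
    simp [Finset.smul_sum, smul_smul]⟩

/-- key helper sum identity -/
lemma sum_update {m : ℕ} (v : Fin m → Fin n → ℝ) (k : Fin m)
    (α : Fin m → ℝ) (u : Fin n → ℝ) :
    ∑ i, α i • Function.update v k u i
      = (∑ i ∈ Finset.univ.erase k, α i • v i) + α k • u := by
  rw [← Finset.sum_erase_add _ _ (Finset.mem_univ k)]
  congr 1
  · exact Finset.sum_congr rfl fun i hi => by
      rw [Function.update_of_ne (Finset.ne_of_mem_erase hi)]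
  · rw [Function.update_self]

lemma mem_coneOf_update_iff {m : ℕ} (v : Fin m → Fin n → ℝ) (k : Fin m)
    (u : Fin n → ℝ) (x : Fin n → ℝ) :
    x ∈ coneOf (Function.update v k u) ↔
      ∃ a ∈ coneOf (Function.update v k (0 : Fin n → ℝ)),
        ∃ t : ℝ, 0 ≤ t ∧ x = a + t • u := by
  constructor
  · rintro ⟨α, hα, rfl⟩
    refine ⟨∑ i, α i • Function.update v k (0 : Fin n → ℝ) i, ⟨α, hα, rfl⟩,
      α k, hα k, ?_⟩
    rw [sum_update, sum_update]
    simp [add_assoc]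
  · rintro ⟨a, ⟨β, hβ, rfl⟩, t, ht, rfl⟩
    refine ⟨Function.update β k t, fun i => ?_, ?_⟩
    · rcases eq_or_ne i k with h | h
      · subst h; simpa using ht
      · rw [Function.update_of_ne h]; exact hβ i
    · have h1 : ∑ i ∈ Finset.univ.erase k, Function.update β k t i • v i
          = ∑ i ∈ Finset.univ.erase k, β i • v i :=
        Finset.sum_congr rfl fun i hi => by
          rw [Function.update_of_ne (Finset.ne_of_mem_erase hi)]
      rw [sum_update, sum_update, h1, Function.update_self]
      simp [add_assoc]

lemma mem_coneOf_snoc_iff {m : ℕ} (v : Fin m → Fin n → ℝ) (u : Fin n → ℝ)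
    (x : Fin n → ℝ) :
    x ∈ coneOf (Fin.snoc v u) ↔
      ∃ a ∈ coneOf v, ∃ t : ℝ, 0 ≤ t ∧ x = a + t • u := by
  constructor
  · rintro ⟨α, hα, rfl⟩
    refine ⟨∑ i, α i.castSucc • v i, ⟨fun i => α i.castSucc, fun i => hα _, rfl⟩,
      α (Fin.last m), hα _, ?_⟩
    rw [Fin.sum_univ_castSucc]
    simp
  · rintro ⟨a, ⟨β, hβ, rfl⟩, t, ht, rfl⟩
    refine ⟨Fin.snoc β t, fun i => ?_, ?_⟩
    · induction i using Fin.lastCases with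
      | last => simpa using ht
      | cast i => simpa using hβ i
    · rw [Fin.sum_univ_castSucc]
      simp

/-- two-sided membership forces membership in the base cone -/
lemma mem_base_of_pos_neg {m : ℕ} {u : Fin m → Fin n → ℝ}
    {w a a' x : Fin n → ℝ} {t s : ℝ} (ht : 0 ≤ t) (hs : 0 ≤ s)
    (ha : a ∈ coneOf u) (ha' : a' ∈ coneOf u)
    (h1 : x = a + t • w) (h2 : x = a' + s • (-w)) : x ∈ coneOf u := by
  rcases eq_or_lt_of_le ht with h | htpos
  · rw [h1, ← h, zero_smul, add_zero]; exact ha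
  rcases eq_or_lt_of_le hs with h | hspos
  · rw [h2, ← h, zero_smul, add_zero]; exact ha'
  have hst : 0 < s + t := by linarith
  have key : x = ((s + t)⁻¹ * s) • a + ((s + t)⁻¹ * t) • a' := by
    have h3 : (s + t) • x = s • a + t • a' := by
      have := congrArg (fun y => s • y) h1
      have h2' := congrArg (fun y => t • y) h2
      calc (s + t) • x = s • x + t • x := add_smul s t x
      _ = (s • a + (s * t) • w) + (t • a' + (t * s) • (-w)) := by
          rw [this, h2', smul_add, smul_add, smul_smul, smul_smul]
      _ = s • a + t • a' := by
          rw [smul_neg]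
          have : (s * t) • w = (t * s) • w := by rw [mul_comm]
          rw [this]; abel
    calc x = (s + t)⁻¹ • ((s + t) • x) := by
          rw [smul_smul, inv_mul_cancel₀ (ne_of_gt hst), one_smul]
    _ = (s + t)⁻¹ • (s • a + t • a') := by rw [h3]
    _ = ((s + t)⁻¹ * s) • a + ((s + t)⁻¹ * t) • a' := by
          rw [smul_add, smul_smul, smul_smul]
  rw [key]
  exact add_mem' (smul_mem' _ (mul_nonneg (inv_nonneg.2 hst.le) hs) ha)
    (smul_mem' _ (mul_nonneg (inv_nonneg.2 hst.le) htpos.le) ha')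

end ConeSpanAux

open ConeSpanAux in
/-- main induction -/
lemma indicator_coneOf_mem_span (n : ℕ) (hn : 1 ≤ n) :
    ∀ (k m : ℕ) (v : Fin m → Fin n → ℝ),
      (Finset.univ.filter fun i => v i ⟨0, hn⟩ < 0).card ≤ k →
      Set.indicator (coneOf v) (fun _ => (1 : ℝ)) ∈ Submodule.span ℝ
        ({f : (Fin n → ℝ) → ℝ | ∃ C' : Set (Fin n → ℝ), IsPolyhedralCone C' ∧
            C' ⊆ {x | 0 ≤ x ⟨0, hn⟩} ∧ f = Set.indicator C' (fun _ => (1 : ℝ))} ∪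
         {f : (Fin n → ℝ) → ℝ | ∃ C' : Set (Fin n → ℝ), IsPolyhedralCone C' ∧
            (∃ w : Fin n → ℝ, w ≠ 0 ∧ ∀ t : ℝ, t • w ∈ C') ∧
            f = Set.indicator C' (fun _ => (1 : ℝ))}) := by
  intro k
  induction k with
  | zero =>
    intro m v hcard
    -- all generators have nonnegative first coordinate
    have hpos : ∀ i, 0 ≤ v i ⟨0, hn⟩ := by
      intro i
      by_contra h
      have : i ∈ Finset.univ.filter fun i => v i ⟨0, hn⟩ < 0 := by
        simp [not_le.1 h]
      have := Finset.card_pos.2 ⟨i, this⟩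
      omega
    apply Submodule.subset_span
    left
    refine ⟨coneOf v, isPolyhedralCone_coneOf v, ?_, rfl⟩
    rintro x ⟨α, hα, rfl⟩
    show (0:ℝ) ≤ _
    rw [Finset.sum_apply]
    exact Finset.sum_nonneg fun i _ =>
      mul_nonneg (hα i) (hpos i)
  | succ k ih =>
    intro m v hcard
    by_cases hb : ∃ i, v i ⟨0, hn⟩ < 0
    · obtain ⟨k₀, hk₀⟩ := hb
      set w := v k₀ with hw
      have hwne : w ≠ 0 := by
        intro h
        rw [h] at hk₀
        simp at hk₀
      -- the four cones
      set C₀ : Set (Fin n → ℝ) := coneOf (Function.update v k₀ (0 : Fin n → ℝ)) with hC₀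
      set Cm : Set (Fin n → ℝ) := coneOf (Function.update v k₀ (-w)) with hCm
      set CL : Set (Fin n → ℝ) := coneOf (Fin.snoc v (-w)) with hCL
      -- cardinality counts
      have hcount : ∀ u : Fin n → ℝ, ¬ (u ⟨0, hn⟩ < 0) →
          (Finset.univ.filter fun i => (Function.update v k₀ u) i ⟨0, hn⟩ < 0).card ≤ k := by
        intro u hu
        have heq : (Finset.univ.filter fun i => (Function.update v k₀ u) i ⟨0, hn⟩ < 0)
            = (Finset.univ.filter fun i => v i ⟨0, hn⟩ < 0).erase k₀ := by
          ext i
          by_cases h : i = k₀ <;>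
            simp [Finset.mem_erase, Function.update_apply, h, hu, hk₀]
        have hk₀mem : k₀ ∈ Finset.univ.filter fun i => v i ⟨0, hn⟩ < 0 := by
          simp [← hw, hk₀]
        rw [heq, Finset.card_erase_of_mem hk₀mem]
        have := Finset.card_pos.2 ⟨k₀, hk₀mem⟩
        omega
      have h0span := ih m (Function.update v k₀ (0 : Fin n → ℝ)) (hcount 0 (by simp))
      have hmspan := ih m (Function.update v k₀ (-w)) (hcount (-w) (by simp; linarith))
      have hLspan : Set.indicator CL (fun _ => (1:ℝ)) ∈ Submodule.span ℝ
          ({f : (Fin n → ℝ) → ℝ | ∃ C' : Set (Fin n → ℝ), IsPolyhedralCone C' ∧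
              C' ⊆ {x | 0 ≤ x ⟨0, hn⟩} ∧ f = Set.indicator C' (fun _ => (1 : ℝ))} ∪
           {f : (Fin n → ℝ) → ℝ | ∃ C' : Set (Fin n → ℝ), IsPolyhedralCone C' ∧
              (∃ w : Fin n → ℝ, w ≠ 0 ∧ ∀ t : ℝ, t • w ∈ C') ∧
              f = Set.indicator C' (fun _ => (1 : ℝ))}) := by
        apply Submodule.subset_span
        right
        refine ⟨CL, isPolyhedralCone_coneOf _, ⟨w, hwne, fun t => ?_⟩, rfl⟩
        rw [hCL, mem_coneOf_snoc_iff]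
        rcases le_or_gt 0 t with h | h
        · refine ⟨t • w, ?_, 0, le_refl 0, by simp⟩
          have : t • w = t • v k₀ := by rw [hw]
          rw [this]
          exact smul_mem' t h ⟨fun j => if j = k₀ then 1 else 0,
            fun j => by by_cases h : j = k₀ <;> simp [h], by simp [ite_smul]⟩
        · refine ⟨0, zero_mem v, -t, by linarith, by simp⟩
      -- membership characterizations
      have hmemP : ∀ x, x ∈ coneOf v ↔ ∃ a ∈ C₀, ∃ t : ℝ, 0 ≤ t ∧ x = a + t • w := by
        intro x
        conv_lhs => rw [show v = Function.update v k₀ w from (Function.update_eq_self k₀ v).symm]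
        exact mem_coneOf_update_iff v k₀ w x
      have hmemN : ∀ x, x ∈ Cm ↔ ∃ a ∈ C₀, ∃ t : ℝ, 0 ≤ t ∧ x = a + t • (-w) :=
        fun x => mem_coneOf_update_iff v k₀ (-w) x
      have hmemL : ∀ x, x ∈ CL ↔ ∃ a ∈ C₀, ∃ r : ℝ, x = a + r • w := by
        intro x
        rw [hCL, mem_coneOf_snoc_iff]
        constructor
        · rintro ⟨a, ha, s, hs, rfl⟩
          obtain ⟨b, hb, t, ht, rfl⟩ := (hmemP a).1 ha
          exact ⟨b, hb, t - s, by rw [sub_smul, smul_neg]; abel⟩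
        · rintro ⟨a, ha, r, rfl⟩
          rcases le_or_gt 0 r with h | h
          · exact ⟨a + r • w, (hmemP _).2 ⟨a, ha, r, h, rfl⟩, 0, le_refl 0, by simp⟩
          · exact ⟨a, (hmemP a).2 ⟨a, ha, 0, le_refl 0, by simp⟩, -r, by linarith,
              by rw [smul_neg, neg_smul, neg_neg]⟩
      -- the pointwise identity
      have hident : ∀ x, Set.indicator (coneOf v) (fun _ => (1:ℝ)) x
          = Set.indicator CL (fun _ => (1:ℝ)) x + Set.indicator C₀ (fun _ => (1:ℝ)) x
            - Set.indicator Cm (fun _ => (1:ℝ)) x := by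
        intro x
        by_cases hx0 : x ∈ C₀
        · have hxP : x ∈ coneOf v := (hmemP x).2 ⟨x, hx0, 0, le_refl 0, by simp⟩
          have hxN : x ∈ Cm := (hmemN x).2 ⟨x, hx0, 0, le_refl 0, by simp⟩
          have hxL : x ∈ CL := (hmemL x).2 ⟨x, hx0, 0, by simp⟩
          rw [Set.indicator_of_mem hxP, Set.indicator_of_mem hxN,
            Set.indicator_of_mem hxL, Set.indicator_of_mem hx0]
          ring
        · by_cases hxL : x ∈ CL
          · obtain ⟨a, ha, r, rfl⟩ := (hmemL x).1 hxL
            rcases le_or_gt 0 r with h | h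
            · have hxP : a + r • w ∈ coneOf v := (hmemP _).2 ⟨a, ha, r, h, rfl⟩
              have hxN : a + r • w ∉ Cm := by
                intro hmem
                obtain ⟨a', ha', s, hs, heq⟩ := (hmemN _).1 hmem
                exact hx0 (mem_base_of_pos_neg h hs ha ha' rfl heq)
              rw [Set.indicator_of_mem hxP, Set.indicator_of_notMem hxN,
                Set.indicator_of_mem hxL, Set.indicator_of_notMem hx0]
              ring
            · have hxN : a + r • w ∈ Cm := (hmemN _).2 ⟨a, ha, -r, by linarith,
                by rw [smul_neg, neg_smul, neg_neg]⟩
              have hxP : a + r • w ∉ coneOf v := by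
                intro hmem
                obtain ⟨a', ha', t, ht, heq⟩ := (hmemP _).1 hmem
                refine hx0 (mem_base_of_pos_neg ht (neg_nonneg.2 h.le) ha' ha heq ?_)
                rw [smul_neg, neg_smul, neg_neg]
              rw [Set.indicator_of_notMem hxP, Set.indicator_of_mem hxN,
                Set.indicator_of_mem hxL, Set.indicator_of_notMem hx0]
              ring
          · have hxP : x ∉ coneOf v := by
              intro hmem
              obtain ⟨a, ha, t, ht, rfl⟩ := (hmemP x).1 hmem
              exact hxL ((hmemL _).2 ⟨a, ha, t, rfl⟩)
            have hxN : x ∉ Cm := by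
              intro hmem
              obtain ⟨a, ha, t, ht, rfl⟩ := (hmemN x).1 hmem
              exact hxL ((hmemL _).2 ⟨a, ha, -t, by rw [smul_neg, neg_smul]⟩)
            rw [Set.indicator_of_notMem hxP, Set.indicator_of_notMem hxN,
              Set.indicator_of_notMem hxL, Set.indicator_of_notMem hx0]
            ring
      have heqfun : Set.indicator (coneOf v) (fun _ => (1:ℝ))
          = Set.indicator CL (fun _ => (1:ℝ)) + Set.indicator C₀ (fun _ => (1:ℝ))
            - Set.indicator Cm (fun _ => (1:ℝ)) := funext hident
      rw [heqfun]
      exact sub_mem (add_mem hLspan h0span) hmspan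
    · -- no negative generator: cone is in the halfspace
      push_neg at hb
      apply Submodule.subset_span
      left
      refine ⟨coneOf v, isPolyhedralCone_coneOf v, ?_, rfl⟩
      rintro x ⟨α, hα, rfl⟩
      show (0:ℝ) ≤ _
      rw [Finset.sum_apply]
      exact Finset.sum_nonneg fun i _ => mul_nonneg (hα i) (hb i)

/-- the indicator of any polyhedral cone lies in the span of
indicators of cones contained in the halfspace `x₁ ≥ 0` together with
indicators of cones containing a line. -/
theorem indicator_cone_mem_span (n : ℕ) (hn : 1 ≤ n)
    (C : Set (Fin n → ℝ)) (hC : IsPolyhedralCone C) :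
    Set.indicator C (fun _ => (1 : ℝ)) ∈ Submodule.span ℝ
      ({f : (Fin n → ℝ) → ℝ | ∃ C' : Set (Fin n → ℝ), IsPolyhedralCone C' ∧
          C' ⊆ {x | 0 ≤ x ⟨0, hn⟩} ∧ f = Set.indicator C' (fun _ => (1 : ℝ))} ∪
       {f : (Fin n → ℝ) → ℝ | ∃ C' : Set (Fin n → ℝ), IsPolyhedralCone C' ∧
          (∃ w : Fin n → ℝ, w ≠ 0 ∧ ∀ t : ℝ, t • w ∈ C') ∧
          f = Set.indicator C' (fun _ => (1 : ℝ))}) := by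
  obtain ⟨m, v, rfl⟩ := hC
  exact indicator_coneOf_mem_span n hn
    (Finset.univ.filter fun i => v i ⟨0, hn⟩ < 0).card m v (le_refl _)
end

section
/- Let P_1, …, P_r ⊆ ℝ^d be nonempty polytopes and α_1, …, α_r ∈ ℝ such that Σ_{i=1}^r α_i · 1_{P_i}(y) = 0 for all y ∈ ℝ^d. For a polytope P let C(P) := { (t, t·y) : t ≥ 0, y ∈ P } ⊆ ℝ^{1+d}. Then Σ_{i=1}^r α_i · 1_{C(P_i)}(w) = 0 for all w ∈ ℝ^{1+d}; in particular Σ_{i=1}^r α_i = 0. -/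
open Set

lemma exists_gap (E : Finset ℝ) : ∃ ε > (0:ℝ), ∀ x ∈ E, ∀ y ∈ E, x < y → x + ε < y := by
  classical
  set D : Finset ℝ := ((E ×ˢ E).filter (fun p => p.1 < p.2)).image (fun p => p.2 - p.1) with hD
  by_cases h : D.Nonempty
  · refine ⟨D.min' h / 2, ?_, ?_⟩
    · have : ∀ z ∈ D, 0 < z := by
        intro z hz
        simp only [hD, Finset.mem_image, Finset.mem_filter] at hz
        obtain ⟨p, ⟨_, hlt⟩, rfl⟩ := hz
        linarith
      have := this _ (D.min'_mem h)
      linarith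
    · intro x hx y hy hxy
      have hmem : y - x ∈ D := by
        simp only [hD, Finset.mem_image, Finset.mem_filter]
        exact ⟨(x, y), ⟨Finset.mem_product.2 ⟨hx, hy⟩, hxy⟩, rfl⟩
      have h1 := D.min'_le _ hmem
      have h2 : 0 < D.min' h := by
        have : ∀ z ∈ D, 0 < z := by
          intro z hz
          simp only [hD, Finset.mem_image, Finset.mem_filter] at hz
          obtain ⟨p, ⟨_, hlt⟩, rfl⟩ := hz
          linarith
        exact this _ (D.min'_mem h)
      linarith
  · refine ⟨1, one_pos, fun x hx y hy hxy => ?_⟩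
    exfalso
    exact h ⟨y - x, by
      simp only [hD, Finset.mem_image, Finset.mem_filter]
      exact ⟨(x, y), ⟨Finset.mem_product.2 ⟨hx, hy⟩, hxy⟩, rfl⟩⟩

open Classical in
lemma oneD {r : ℕ} (I : Fin r → Set ℝ) (α : Fin r → ℝ)
    (hI : ∀ i, (I i).Nonempty → I i = Set.Icc (sInf (I i)) (sSup (I i)) ∧ sInf (I i) ≤ sSup (I i))
    (h : ∀ t : ℝ, ∑ i, α i * (I i).indicator (fun _ => (1:ℝ)) t = 0) :
    ∑ i, α i * (if (I i).Nonempty then (1:ℝ) else 0) = 0 := by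
  classical
  set A : Fin r → ℝ := fun i => sInf (I i) with hA
  set Bf : Fin r → ℝ := fun i => sSup (I i) with hBf
  set N : Finset (Fin r) := Finset.univ.filter (fun i => (I i).Nonempty) with hN
  set E : Finset ℝ := N.image A ∪ N.image Bf with hE
  set B : Finset ℝ := N.image Bf with hB
  obtain ⟨ε, hε, hgap⟩ := exists_gap E
  have key : ∀ i, ∑ b ∈ B, ((I i).indicator (fun _ => (1:ℝ)) b
      - (I i).indicator (fun _ => (1:ℝ)) (b + ε)) = if (I i).Nonempty then (1:ℝ) else 0 := by
    intro i
    by_cases hne : (I i).Nonempty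
    · obtain ⟨hIcc, hab⟩ := hI i hne
      have hAE : A i ∈ E := Finset.mem_union_left _ (Finset.mem_image_of_mem _ (by simp [hN, hne]))
      have hBE : Bf i ∈ E := Finset.mem_union_right _ (Finset.mem_image_of_mem _ (by simp [hN, hne]))
      have hBB : Bf i ∈ B := Finset.mem_image_of_mem _ (by simp [hN, hne])
      have hterm : ∀ b ∈ B, (I i).indicator (fun _ => (1:ℝ)) b
          - (I i).indicator (fun _ => (1:ℝ)) (b + ε) = if b = Bf i then (1:ℝ) else 0 := by
        intro b hb
        have hbE : b ∈ E := Finset.mem_union_right _ hb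
        rcases eq_or_ne b (Bf i) with heq | hbne
        · subst heq
          have h1 : Bf i ∈ I i := by rw [hIcc]; exact ⟨hab, le_refl _⟩
          have h2 : Bf i + ε ∉ I i := by rw [hIcc]; intro hmem; exact absurd hmem.2 (by simp only [hBf]; linarith)
          simp [Set.indicator_of_mem h1, Set.indicator_of_notMem h2]
        · rcases lt_or_gt_of_ne hbne with hlt | hgt
          · have hbeps : b + ε < Bf i := hgap b hbE _ hBE hlt
            rcases lt_or_ge b (A i) with hba | hba
            · have hbeps2 : b + ε < A i := hgap b hbE _ hAE hba
              have h1 : b ∉ I i := by rw [hIcc]; intro ⟨h1, _⟩; linarith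
              have h2 : b + ε ∉ I i := by rw [hIcc]; intro ⟨h2, _⟩; linarith
              simp [Set.indicator_of_notMem h1, Set.indicator_of_notMem h2, hbne]
            · have h1 : b ∈ I i := by rw [hIcc]; exact ⟨hba, le_of_lt hlt⟩
              have h2 : b + ε ∈ I i := by rw [hIcc]; exact ⟨by linarith, le_of_lt hbeps⟩
              simp [Set.indicator_of_mem h1, Set.indicator_of_mem h2, hbne]
          · have h1 : b ∉ I i := by rw [hIcc]; intro ⟨_, h1⟩; exact absurd h1 (not_le.2 hgt)
            have h2 : b + ε ∉ I i := by rw [hIcc]; intro ⟨_, h2⟩; linarith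
            simp [Set.indicator_of_notMem h1, Set.indicator_of_notMem h2, hbne]
      rw [Finset.sum_congr rfl hterm]
      simp [Finset.sum_ite_eq' B (Bf i), hBB, hne]
    · have : I i = ∅ := Set.not_nonempty_iff_eq_empty.1 hne
      simp [this, hne]
  have main : ∑ b ∈ B, (∑ i, α i * (I i).indicator (fun _ => (1:ℝ)) b
      - ∑ i, α i * (I i).indicator (fun _ => (1:ℝ)) (b + ε)) = 0 := by
    simp [h]
  calc ∑ i, α i * (if (I i).Nonempty then (1:ℝ) else 0)
      = ∑ i, α i * ∑ b ∈ B, ((I i).indicator (fun _ => (1:ℝ)) b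
        - (I i).indicator (fun _ => (1:ℝ)) (b + ε)) := by
        refine Finset.sum_congr rfl fun i _ => ?_; rw [key i]
    _ = ∑ b ∈ B, ∑ i, α i * ((I i).indicator (fun _ => (1:ℝ)) b
        - (I i).indicator (fun _ => (1:ℝ)) (b + ε)) := by
        rw [Finset.sum_comm]
        exact Finset.sum_congr rfl fun i _ => Finset.mul_sum _ _ _
    _ = 0 := by
        rw [← main]
        refine Finset.sum_congr rfl fun b _ => ?_
        rw [← Finset.sum_sub_distrib]
        exact Finset.sum_congr rfl fun i _ => by ring

lemma polytope_sum_zero (d : ℕ) : ∀ (r : ℕ) (P : Fin r → Set (Fin d → ℝ)) (α : Fin r → ℝ),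
    (∀ i, (P i).Nonempty ∧ ∃ s : Finset (Fin d → ℝ), P i = convexHull ℝ (↑s : Set (Fin d → ℝ))) →
    (∀ y, ∑ i, α i * (P i).indicator (fun _ => (1:ℝ)) y = 0) →
    ∑ i, α i = 0 := by
  induction d with
  | zero =>
    intro r P α hP hind
    have h0 := hind (fun j => j.elim0)
    have hone : ∀ i : Fin r, (P i).indicator (fun _ => (1:ℝ)) (fun j => j.elim0) = 1 := by
      intro i
      obtain ⟨y, hy⟩ := (hP i).1
      have hy' : (fun j : Fin 0 => j.elim0) = y := funext fun j => j.elim0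
      rw [hy', Set.indicator_of_mem hy]
    calc ∑ i, α i = ∑ i, α i * (P i).indicator (fun _ => (1:ℝ)) (fun j => j.elim0) := by
          refine Finset.sum_congr rfl fun i _ => ?_; rw [hone i, mul_one]
      _ = 0 := h0
  | succ d ih =>
    intro r P α hP hind
    classical
    set Q : Fin r → Set (Fin d → ℝ) := fun i => Fin.init '' P i with hQ
    have hLinit : (Fin.init : (Fin (d+1) → ℝ) → (Fin d → ℝ))
        = ⇑(LinearMap.funLeft ℝ ℝ (Fin.castSucc : Fin d → Fin (d+1))) := rfl
    apply ih r Q α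
    · intro i
      obtain ⟨s, hs⟩ := (hP i).2
      refine ⟨(hP i).1.image _, s.image Fin.init, ?_⟩
      rw [hQ]
      simp only [hs, hLinit]
      rw [LinearMap.image_convexHull, Finset.coe_image]
    · intro y'
      set I : Fin r → Set ℝ := fun i => {t : ℝ | Fin.snoc y' t ∈ P i} with hI
      have hmemI : ∀ i t, t ∈ I i ↔ Fin.snoc y' t ∈ P i := fun i t => Iff.rfl
      have hIimg : ∀ i, I i = (fun y : Fin (d+1) → ℝ => y (Fin.last d))
          '' (P i ∩ Fin.init ⁻¹' {y'}) := by
        intro i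
        ext t
        constructor
        · intro ht
          exact ⟨Fin.snoc y' t, ⟨ht, by simp⟩, by simp⟩
        · rintro ⟨y, ⟨hyP, hyinit⟩, rfl⟩
          have : Fin.init y = y' := hyinit
          show Fin.snoc y' (y (Fin.last d)) ∈ P i
          rw [← this, Fin.snoc_init_self]
          exact hyP
      have hcompactP : ∀ i, IsCompact (P i) := by
        intro i
        obtain ⟨s, hs⟩ := (hP i).2
        rw [hs]
        exact s.finite_toSet.isCompact_convexHull (𝕜 := ℝ)
      have hconvP : ∀ i, Convex ℝ (P i) := by
        intro i
        obtain ⟨s, hs⟩ := (hP i).2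
        rw [hs]
        exact convex_convexHull ℝ _
      have hcontInit : Continuous (Fin.init : (Fin (d+1) → ℝ) → (Fin d → ℝ)) :=
        continuous_pi fun j => continuous_apply _
      have hcompactI : ∀ i, IsCompact (I i) := by
        intro i
        rw [hIimg i]
        exact (((hcompactP i).inter_right (isClosed_singleton.preimage hcontInit)).image
          (continuous_apply (Fin.last d)))
      have hconvI : ∀ i, Convex ℝ (I i) := by
        intro i
        intro t1 h1 t2 h2 a b ha hb hab
        show (Fin.snoc y' (a • t1 + b • t2) : Fin (d+1) → ℝ) ∈ P i
        have heq : (Fin.snoc y' (a • t1 + b • t2) : Fin (d+1) → ℝ)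
            = a • (Fin.snoc y' t1 : Fin (d+1) → ℝ) + b • (Fin.snoc y' t2 : Fin (d+1) → ℝ) := by
          funext x
          refine Fin.lastCases ?_ ?_ x
          · simp [Fin.snoc_last]
          · intro j
            simp only [Fin.snoc_castSucc, Pi.add_apply, Pi.smul_apply, smul_eq_mul]
            rw [← add_mul, hab, one_mul]
        rw [heq]
        exact hconvP i h1 h2 ha hb hab
      have hIIcc : ∀ i, (I i).Nonempty →
          I i = Set.Icc (sInf (I i)) (sSup (I i)) ∧ sInf (I i) ≤ sSup (I i) := by
        intro i hne
        have hIcc := eq_Icc_of_connected_compact ⟨hne, (hconvI i).isPreconnected⟩ (hcompactI i)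
        refine ⟨hIcc, ?_⟩
        obtain ⟨t, ht⟩ := hne
        rw [hIcc] at ht
        exact ht.1.trans ht.2
      have hslices : ∀ t : ℝ, ∑ i, α i * (I i).indicator (fun _ => (1:ℝ)) t = 0 := by
        intro t
        have := hind (Fin.snoc y' t)
        calc ∑ i, α i * (I i).indicator (fun _ => (1:ℝ)) t
            = ∑ i, α i * (P i).indicator (fun _ => (1:ℝ)) (Fin.snoc y' t) := by
              refine Finset.sum_congr rfl fun i _ => ?_
              by_cases hm : Fin.snoc y' t ∈ P i
              · rw [Set.indicator_of_mem hm, Set.indicator_of_mem ((hmemI i t).2 hm)]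
              · rw [Set.indicator_of_notMem hm,
                  Set.indicator_of_notMem (fun h => hm ((hmemI i t).1 h))]
          _ = 0 := this
      have key := oneD I α hIIcc hslices
      have hQne : ∀ i, y' ∈ Q i ↔ (I i).Nonempty := by
        intro i
        constructor
        · rintro ⟨y, hyP, rfl⟩
          exact ⟨y (Fin.last d), by
            show Fin.snoc (Fin.init y) (y (Fin.last d)) ∈ P i
            rw [Fin.snoc_init_self]; exact hyP⟩
        · rintro ⟨t, ht⟩
          exact ⟨Fin.snoc y' t, ht, by simp⟩
      calc ∑ i, α i * (Q i).indicator (fun _ => (1:ℝ)) y'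
          = ∑ i, α i * (if (I i).Nonempty then (1:ℝ) else 0) := by
            refine Finset.sum_congr rfl fun i _ => ?_
            by_cases hm : (I i).Nonempty
            · rw [Set.indicator_of_mem ((hQne i).2 hm), if_pos hm]
            · rw [Set.indicator_of_notMem (fun h => hm ((hQne i).1 h)), if_neg hm]
        _ = 0 := key

/-- an indicator identity among polytopes lifts to the cones over
them; in particular the coefficients sum to zero. -/
theorem indicator_identity_lifts_to_cones (d r : ℕ)
    (P : Fin r → Set (Fin d → ℝ)) (α : Fin r → ℝ)
    (hP : ∀ i, (P i).Nonempty ∧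
      ∃ s : Finset (Fin d → ℝ), P i = convexHull ℝ (↑s : Set (Fin d → ℝ)))
    (hind : ∀ y : Fin d → ℝ, ∑ i, α i * Set.indicator (P i) (fun _ => (1:ℝ)) y = 0) :
    (∀ w : Fin (d + 1) → ℝ,
      ∑ i, α i * Set.indicator
        {x : Fin (d + 1) → ℝ | ∃ t : ℝ, 0 ≤ t ∧ ∃ y ∈ P i, x = Fin.cons t (t • y)}
        (fun _ => (1:ℝ)) w = 0) ∧
    ∑ i, α i = 0 := by
  have hsum : ∑ i, α i = 0 := polytope_sum_zero d r P α hP hind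
  refine ⟨?_, hsum⟩
  intro w
  set C : Fin r → Set (Fin (d+1) → ℝ) := fun i =>
    {x : Fin (d + 1) → ℝ | ∃ t : ℝ, 0 ≤ t ∧ ∃ y ∈ P i, x = Fin.cons t (t • y)} with hC
  rcases lt_trichotomy (w 0) 0 with hw | hw | hw
  · have : ∀ i, w ∉ C i := by
      rintro i ⟨t, ht, y, hy, rfl⟩
      rw [Fin.cons_zero] at hw
      exact absurd ht (not_le.2 hw)
    exact Finset.sum_eq_zero fun i _ => by rw [Set.indicator_of_notMem (this i), mul_zero]
  · by_cases htail : Fin.tail w = 0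
    · have hmem : ∀ i, w ∈ C i := by
        intro i
        obtain ⟨y, hy⟩ := (hP i).1
        refine ⟨0, le_refl _, y, hy, ?_⟩
        rw [← Fin.cons_self_tail w, hw, htail]
        congr 1
        simp
      calc ∑ i, α i * (C i).indicator (fun _ => (1:ℝ)) w = ∑ i, α i := by
            refine Finset.sum_congr rfl fun i _ => ?_
            rw [Set.indicator_of_mem (hmem i), mul_one]
        _ = 0 := hsum
    · have : ∀ i, w ∉ C i := by
        rintro i ⟨t, ht, y, hy, rfl⟩
        rw [Fin.cons_zero] at hw
        apply htail
        rw [Fin.tail_cons, hw, zero_smul]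
      exact Finset.sum_eq_zero fun i _ => by rw [Set.indicator_of_notMem (this i), mul_zero]
  · set z : Fin d → ℝ := (w 0)⁻¹ • Fin.tail w with hz
    have hne : w 0 ≠ 0 := ne_of_gt hw
    have hmem : ∀ i, w ∈ C i ↔ z ∈ P i := by
      intro i
      constructor
      · rintro ⟨t, ht, y, hy, rfl⟩
        rw [Fin.cons_zero] at hz hne
        have : z = y := by rw [hz, Fin.tail_cons, inv_smul_smul₀ hne]
        rw [this]; exact hy
      · intro hzP
        refine ⟨w 0, le_of_lt hw, z, hzP, ?_⟩
        rw [hz, smul_inv_smul₀ hne, Fin.cons_self_tail]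
    calc ∑ i, α i * (C i).indicator (fun _ => (1:ℝ)) w
        = ∑ i, α i * (P i).indicator (fun _ => (1:ℝ)) z := by
          refine Finset.sum_congr rfl fun i _ => ?_
          by_cases hm : z ∈ P i
          · rw [Set.indicator_of_mem hm, Set.indicator_of_mem ((hmem i).2 hm)]
          · rw [Set.indicator_of_notMem hm,
              Set.indicator_of_notMem (fun h => hm ((hmem i).1 h))]
      _ = 0 := hind z
end

section
/- (Dual volume of a simplex.) Let q_1, …, q_{d+1} ∈ ℝ^d be affinely independent points and P = conv{q_1, …, q_{d+1}}, and assume 0 lies in the interior of P. For each a ∈ {1, …, d+1} choose v_a ∈ ℝ^d and c_a ∈ ℝ such that ⟨v_a, q_b⟩ = −c_a for all b ≠ a and ⟨v_a, q_a⟩ > −c_a (such facet data exist and are unique up to positive scaling). Then c_a > 0 for every a, and d! · λ( P^∨ ) = |det M| / (c_1 c_2 ⋯ c_{d+1}), where M is the (d+1)×(d+1) matrix whose a-th row is the vector (c_a, v_a) ∈ ℝ^{1+d}. -/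
open MeasureTheory Pointwise

/-- Corner simplex. -/
def corner (d : ℕ) (t : ℝ) : Set (Fin d → ℝ) :=
  {x | (∀ i, 0 ≤ x i) ∧ ∑ i, x i ≤ t}

lemma corner_empty {d : ℕ} {t : ℝ} (ht : t < 0) : corner d t = ∅ := by
  ext x
  simp only [corner, Set.mem_setOf_eq, Set.mem_empty_iff_false, iff_false, not_and]
  intro h hs
  have : (0:ℝ) ≤ ∑ i, x i := Finset.sum_nonneg fun i _ => h i
  linarith

lemma measurableSet_corner (d : ℕ) (t : ℝ) : MeasurableSet (corner d t) := by
  have h1 : MeasurableSet {x : Fin d → ℝ | ∀ i, 0 ≤ x i} := by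
    rw [Set.setOf_forall]
    exact MeasurableSet.iInter fun i => measurableSet_le measurable_const (measurable_pi_apply i)
  exact h1.inter (measurableSet_le (Finset.measurable_sum _ fun i _ => measurable_pi_apply i) measurable_const)

lemma volume_corner : ∀ (d : ℕ) (t : ℝ), 0 ≤ t →
    volume (corner d t) = ENNReal.ofReal (t ^ d / d.factorial) := by
  intro d
  induction d with
  | zero =>
    intro t ht
    have : corner 0 t = Set.univ := by
      ext x
      simp [corner, ht]
    rw [this]
    rw [MeasureTheory.volume_pi, Measure.pi_univ]
    simp
  | succ d ih =>
    intro t ht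
    have hmp := MeasureTheory.volume_preserving_piFinSuccAbove (fun _ : Fin (d+1) => ℝ) 0
    set T : Set (ℝ × (Fin d → ℝ)) :=
      {p | 0 ≤ p.1 ∧ (∀ i, 0 ≤ p.2 i) ∧ p.1 + ∑ i, p.2 i ≤ t} with hTdef
    have hT : MeasurableSet T := by
      apply MeasurableSet.inter
      · exact measurableSet_le measurable_const measurable_fst
      apply MeasurableSet.inter
      · show MeasurableSet {p : ℝ × (Fin d → ℝ) | ∀ i, 0 ≤ p.2 i}
        rw [Set.setOf_forall]
        exact MeasurableSet.iInter fun i =>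
          measurableSet_le measurable_const (by fun_prop)
      · exact measurableSet_le
          (measurable_fst.add <| Finset.measurable_sum _ fun i _ =>
            by fun_prop) measurable_const
    have hpre : (MeasurableEquiv.piFinSuccAbove (fun _ : Fin (d+1) => ℝ) 0) ⁻¹' T
        = corner (d+1) t := by
      ext x
      simp only [Set.mem_preimage, MeasurableEquiv.piFinSuccAbove_apply, hTdef,
        Set.mem_setOf_eq, corner, MeasurableEquiv.coe_mk, Fin.insertNthEquiv_symm_apply, Fin.removeNth_apply,
          Fin.succAbove_zero]
      constructor
      · rintro ⟨h0, hpos, hsum⟩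
        refine ⟨fun i => ?_, ?_⟩
        · rcases Fin.eq_zero_or_eq_succ i with rfl | ⟨j, rfl⟩
          · exact h0
          · exact hpos j
        · rw [Fin.sum_univ_succ]
          convert hsum using 2
      · rintro ⟨hpos, hsum⟩
        refine ⟨hpos 0, fun i => hpos _, ?_⟩
        rw [Fin.sum_univ_succ] at hsum
        convert hsum using 2
    have h1 : volume (corner (d+1) t) = (volume.prod volume) T := by
      rw [← hpre]
      exact hmp.measure_preimage hT.nullMeasurableSet
    rw [h1, Measure.prod_apply hT]
    have hslice : ∀ s : ℝ, (Prod.mk s ⁻¹' T) =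
        if 0 ≤ s then corner d (t - s) else ∅ := by
      intro s
      by_cases hs : 0 ≤ s
      · rw [if_pos hs]
        ext y
        simp only [Set.mem_preimage, hTdef, Set.mem_setOf_eq, corner]
        constructor
        · rintro ⟨_, h1, h2⟩; exact ⟨h1, by linarith⟩
        · rintro ⟨h1, h2⟩; exact ⟨hs, h1, by linarith⟩
      · rw [if_neg hs]
        ext y
        simp only [Set.mem_preimage, hTdef, Set.mem_setOf_eq,
          Set.mem_empty_iff_false, iff_false]
        rintro ⟨h0, -, -⟩; exact hs h0
    have hvols : ∀ s : ℝ, volume (Prod.mk s ⁻¹' T) =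
        Set.indicator (Set.Icc 0 t) (fun s => ENNReal.ofReal ((t - s) ^ d / d.factorial)) s := by
      intro s
      rw [hslice s]
      rcases le_or_gt 0 s with hs | hs
      · rcases le_or_gt s t with hst | hst
        · rw [if_pos hs, Set.indicator_of_mem (Set.mem_Icc.mpr ⟨hs, hst⟩), ih (t - s) (by linarith)]
        · rw [if_pos hs, corner_empty (by linarith),
            Set.indicator_of_notMem (by simp [hst.not_ge])]
          simp
      · rw [if_neg hs.not_ge, Set.indicator_of_notMem (by simp [hs.not_ge])]
        simp
    simp_rw [hvols]
    rw [lintegral_indicator measurableSet_Icc]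
    have hint : ∫⁻ s in Set.Icc (0:ℝ) t, ENNReal.ofReal ((t - s) ^ d / d.factorial)
        = ENNReal.ofReal (∫ s in Set.Icc (0:ℝ) t, (t - s) ^ d / d.factorial) := by
      rw [← MeasureTheory.ofReal_integral_eq_lintegral_ofReal]
      · apply Continuous.integrableOn_Icc
        continuity
      · refine (ae_restrict_iff' measurableSet_Icc).2 (MeasureTheory.ae_of_all _ fun s hs => ?_)
        have h2 : (0:ℝ) ≤ t - s := by linarith [hs.2]
        positivity
    rw [hint]
    congr 1
    rw [MeasureTheory.integral_Icc_eq_integral_Ioc, ← intervalIntegral.integral_of_le ht]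
    have := intervalIntegral.integral_comp_sub_left (a := (0:ℝ)) (b := t) (fun x => x ^ d / d.factorial) t
    rw [this, sub_zero, sub_self]
    rw [intervalIntegral.integral_div, integral_pow]
    rw [Nat.factorial_succ]
    push_cast
    field_simp
    simp

lemma convex_corner (d : ℕ) (t : ℝ) : Convex ℝ (corner d t) := by
  have : corner d t = (⋂ i, {x : Fin d → ℝ | 0 ≤ x i}) ∩ {x | ∑ i, x i ≤ t} := by
    ext x; simp [corner, Set.mem_iInter]
  rw [this]
  refine Convex.inter (convex_iInter fun i => ?_) ?_
  · exact convex_halfSpace_ge ⟨fun a b => rfl, fun r a => rfl⟩ 0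
  · exact convex_halfSpace_le ⟨fun a b => by simp [Finset.sum_add_distrib],
      fun r a => by simp [Finset.mul_sum]⟩ t

lemma convexHull_corner (d : ℕ) :
    convexHull ℝ (insert 0 (Set.range fun i : Fin d => (Pi.single i 1 : Fin d → ℝ)))
      = corner d 1 := by
  apply le_antisymm
  · apply convexHull_min _ (convex_corner d 1)
    rintro x (rfl | ⟨i, rfl⟩)
    · exact ⟨fun i => le_refl 0, by simp⟩
    · refine ⟨fun j => by by_cases h : i = j <;> simp [Pi.single_apply, h], ?_⟩
      simp [Pi.single_apply]
  · intro x hx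
    obtain ⟨hx0, hx1⟩ := hx
    have := Finset.centerMass_mem_convexHull (Finset.univ : Finset (Fin (d+1)))
      (w := Fin.cons (1 - ∑ i, x i) x)
      (z := Fin.cons 0 (fun i => (Pi.single i 1 : Fin d → ℝ)))
      (s := insert 0 (Set.range fun i : Fin d => (Pi.single i 1 : Fin d → ℝ)))
      ?_ ?_ ?_
    · convert this using 1
      rw [Finset.centerMass]
      rw [Fin.sum_univ_succ, Fin.sum_univ_succ]
      simp only [Fin.cons_zero, Fin.cons_succ]
      rw [show (1 - ∑ i, x i) + ∑ i, x i = 1 by ring]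
      rw [inv_one, one_smul, smul_zero, zero_add]
      rw [show ∀ (f : Fin d → (Fin d → ℝ)), ∑ i, x i • f i = ∑ i, x i • f i from fun _ => rfl]
      ext j
      simp only [Finset.sum_apply, Pi.smul_apply, smul_eq_mul]
      simp [Pi.single_apply, Finset.sum_ite_eq, mul_comm]
    · intro i _
      rcases Fin.eq_zero_or_eq_succ i with rfl | ⟨j, rfl⟩
      · simpa using hx1
      · simpa using hx0 j
    · rw [Fin.sum_univ_succ]
      simp only [Fin.cons_zero, Fin.cons_succ]
      rw [show (1 - ∑ i, x i) + ∑ i, x i = 1 by ring]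
      norm_num
    · intro i _
      rcases Fin.eq_zero_or_eq_succ i with rfl | ⟨j, rfl⟩
      · simp
      · simp only [Fin.cons_succ]
        exact Set.mem_insert_of_mem _ ⟨j, rfl⟩

lemma volume_simplex (d : ℕ) (w : Fin (d+1) → (Fin d → ℝ)) :
    volume (convexHull ℝ (Set.range w)) =
      ENNReal.ofReal
        (|(Matrix.of fun i j : Fin d => w i.castSucc j - w (Fin.last d) j).det| /
          d.factorial) := by
  set A : Matrix (Fin d) (Fin d) ℝ :=
    Matrix.of (fun i j : Fin d => w j.castSucc i - w (Fin.last d) i) with hA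
  have hAdet : A.det = (Matrix.of fun i j : Fin d => w i.castSucc j - w (Fin.last d) j).det := by
    rw [← Matrix.det_transpose]
    congr 1
  set f : (Fin d → ℝ) →ᵃ[ℝ] (Fin d → ℝ) :=
    (AffineEquiv.constVAdd ℝ (Fin d → ℝ) (w (Fin.last d))).toAffineMap.comp
      (Matrix.toLin' A).toAffineMap with hf
  have hfapp : ∀ x, f x = w (Fin.last d) + A.mulVec x := fun x => rfl
  have himg : f '' (insert 0 (Set.range fun i : Fin d => (Pi.single i 1 : Fin d → ℝ)))
      = Set.range w := by
    ext y
    constructor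
    · rintro ⟨x, (rfl | ⟨i, rfl⟩), rfl⟩
      · refine ⟨Fin.last d, ?_⟩
        rw [hfapp]
        simp [Matrix.mulVec_zero]
      · refine ⟨i.castSucc, ?_⟩
        rw [hfapp]
        rw [Matrix.mulVec_single]
        ext j
        simp [hA]
    · rintro ⟨a, rfl⟩
      rcases Fin.eq_castSucc_or_eq_last a with ⟨i, rfl⟩ | rfl
      · refine ⟨Pi.single i 1, Set.mem_insert_of_mem _ ⟨i, rfl⟩, ?_⟩
        rw [hfapp]
        rw [Matrix.mulVec_single]
        ext j
        simp [hA]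
      · refine ⟨0, Set.mem_insert _ _, ?_⟩
        rw [hfapp]
        simp [Matrix.mulVec_zero]
  have key : convexHull ℝ (Set.range w) = w (Fin.last d) +ᵥ ((Matrix.toLin' A) '' (corner d 1)) := by
    rw [← himg, ← AffineMap.image_convexHull, convexHull_corner d]
    rw [hf, AffineMap.coe_comp, Set.image_comp]
    rfl
  rw [key, measure_vadd, Measure.addHaar_image_linearMap, volume_corner d 1 zero_le_one,
    LinearMap.det_toLin', hAdet]
  rw [← ENNReal.ofReal_mul (abs_nonneg _)]
  congr 1
  rw [one_pow]
  field_simp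

lemma det_cons_one (d : ℕ) (w : Fin (d+1) → (Fin d → ℝ)) :
    |(Matrix.of fun a : Fin (d+1) => Fin.cons 1 (w a) : Matrix (Fin (d+1)) (Fin (d+1)) ℝ).det|
      = |(Matrix.of fun i j : Fin d => w i.castSucc j - w (Fin.last d) j).det| := by
  set N : Matrix (Fin (d+1)) (Fin (d+1)) ℝ := Matrix.of fun a : Fin (d+1) => Fin.cons 1 (w a)
    with hN
  set E : Matrix (Fin (d+1)) (Fin (d+1)) ℝ :=
    Matrix.of (fun a b : Fin (d+1) =>
      if a = b then (1:ℝ) else if b = Fin.last d then -1 else 0) with hE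
  have hEdet : E.det = 1 := by
    rw [Matrix.det_of_upperTriangular]
    · simp [hE]
    · intro i j hij
      simp only [hE, Matrix.of_apply]
      rw [if_neg, if_neg]
      · intro h; rw [h] at hij; exact absurd (Fin.le_last i) (not_le.mpr hij)
      · intro h; rw [h] at hij; exact lt_irrefl _ hij
  have hEN : ∀ a b, (E * N) a b =
      if a = Fin.last d then N a b else N a b - N (Fin.last d) b := by
    intro a b
    rw [Matrix.mul_apply]
    by_cases ha : a = Fin.last d
    · subst ha
      rw [if_pos rfl]
      have : ∀ c, E (Fin.last d) c * N c b = if c = Fin.last d then N (Fin.last d) b else 0 := by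
        intro c
        by_cases hc : c = Fin.last d
        · subst hc; simp [hE]
        · simp [hE, hc, Ne.symm hc]
      rw [Finset.sum_congr rfl fun c _ => this c, Finset.sum_ite_eq' Finset.univ]
      simp
    · rw [if_neg ha]
      have : ∀ c, E a c * N c b =
          (if c = a then N a b else 0) + (if c = Fin.last d then -N (Fin.last d) b else 0) := by
        intro c
        by_cases hc : c = a
        · subst hc
          rw [if_pos rfl, if_neg ha]
          simp [hE]
        · rw [if_neg hc]
          by_cases hcl : c = Fin.last d
          · subst hcl
            simp [hE, Ne.symm hc]
          · simp [hE, Ne.symm hc, hcl]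
      rw [Finset.sum_congr rfl fun c _ => this c, Finset.sum_add_distrib,
        Finset.sum_ite_eq' Finset.univ, Finset.sum_ite_eq' Finset.univ]
      simp
      ring
  have hcol0 : ∀ a, (E * N) a 0 = if a = Fin.last d then 1 else 0 := by
    intro a
    rw [hEN]
    by_cases ha : a = Fin.last d <;> simp [ha, hN]
  have hdetEN : (E * N).det = (-1) ^ d *
      ((E * N).submatrix (Fin.last d).succAbove Fin.succ).det := by
    rw [Matrix.det_succ_column_zero]
    have : ∀ i : Fin (d+1), (-1 : ℝ) ^ (i : ℕ) * (E * N) i 0 *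
        ((E * N).submatrix i.succAbove Fin.succ).det =
        if i = Fin.last d then
          (-1) ^ d * ((E * N).submatrix (Fin.last d).succAbove Fin.succ).det else 0 := by
      intro i
      by_cases hi : i = Fin.last d
      · subst hi
        rw [hcol0, if_pos rfl, if_pos rfl]
        simp [Fin.last]
      · rw [hcol0, if_neg hi, if_neg hi]
        ring
    rw [Finset.sum_congr rfl fun i _ => this i, Finset.sum_ite_eq' Finset.univ]
    simp
  have hsub : (E * N).submatrix (Fin.last d).succAbove Fin.succ =
      Matrix.of fun i j : Fin d => w i.castSucc j - w (Fin.last d) j := by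
    ext i j
    rw [Matrix.submatrix_apply, Fin.succAbove_last, hEN]
    rw [if_neg (Fin.castSucc_lt_last i).ne]
    simp [hN]
  have h1 : N.det = (E * N).det := by
    rw [Matrix.det_mul, hEdet, one_mul]
  rw [h1, hdetEN, hsub, abs_mul, abs_pow, abs_neg, abs_one, one_pow, one_mul]

lemma span_cons_top (d : ℕ) (q : Fin (d+1) → (Fin d → ℝ))
    (haff : AffineIndependent ℝ q) :
    Submodule.span ℝ (Set.range fun b => (Fin.cons 1 (q b) : Fin (d+1) → ℝ)) = ⊤ := by
  have hspan : affineSpan ℝ (Set.range q) = ⊤ := by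
    rw [haff.affineSpan_eq_top_iff_card_eq_finrank_add_one]
    simp [Module.finrank_pi]
  have hcons : ∀ x : Fin d → ℝ,
      (Fin.cons 1 x : Fin (d+1) → ℝ) ∈
        Submodule.span ℝ (Set.range fun b => (Fin.cons 1 (q b) : Fin (d+1) → ℝ)) := by
    intro x
    have hx : x ∈ affineSpan ℝ (Set.range q) := hspan ▸ AffineSubspace.mem_top ℝ _ x
    obtain ⟨μ, hμ1, hμ2⟩ := eq_affineCombination_of_mem_affineSpan_of_fintype hx
    rw [Finset.affineCombination_eq_linear_combination _ _ _ hμ1] at hμ2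
    have : (Fin.cons 1 x : Fin (d+1) → ℝ) = ∑ b, μ b • (Fin.cons 1 (q b) : Fin (d+1) → ℝ) := by
      ext j
      rcases Fin.eq_zero_or_eq_succ j with rfl | ⟨i, rfl⟩
      · simp [hμ1]
      · simp only [Fin.cons_succ, Finset.sum_apply, Pi.smul_apply, smul_eq_mul]
        rw [hμ2]
        simp
    rw [this]
    exact Submodule.sum_mem _ fun b _ =>
      Submodule.smul_mem _ _ (Submodule.subset_span ⟨b, rfl⟩)
  rw [Submodule.eq_top_iff']
  intro z
  have hz : z = (Fin.cons 1 (fun i => z i.succ) : Fin (d+1) → ℝ)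
      - (1 - z 0) • (Fin.cons 1 (fun _ => (0:ℝ)) : Fin (d+1) → ℝ) := by
    ext j
    rcases Fin.eq_zero_or_eq_succ j with rfl | ⟨i, rfl⟩
    · simp
    · simp
  rw [hz]
  exact Submodule.sub_mem _ (hcons _) (Submodule.smul_mem _ _ (hcons _))

lemma eq_of_dot (d : ℕ) (q : Fin (d+1) → (Fin d → ℝ)) (haff : AffineIndependent ℝ q)
    (u1 u2 : Fin (d+1) → ℝ)
    (h : ∀ b, ∑ j, u1 j * (Fin.cons 1 (q b) : Fin (d+1) → ℝ) j
            = ∑ j, u2 j * (Fin.cons 1 (q b) : Fin (d+1) → ℝ) j) : u1 = u2 := by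
  set u : Fin (d+1) → ℝ := u1 - u2 with hu
  set φ : (Fin (d+1) → ℝ) →ₗ[ℝ] ℝ := ∑ j, u j • LinearMap.proj j with hφ
  have hφapp : ∀ z, φ z = ∑ j, u j * z j := by
    intro z
    rw [hφ]
    simp [LinearMap.sum_apply]
  have hker : ∀ b, φ (Fin.cons 1 (q b)) = 0 := by
    intro b
    rw [hφapp]
    have := h b
    simp only [hu, Pi.sub_apply]
    rw [Finset.sum_congr rfl fun j _ => sub_mul (u1 j) (u2 j) _, Finset.sum_sub_distrib,
      this, sub_self]
  have htop : ∀ z, φ z = 0 := by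
    intro z
    have h1 : Submodule.span ℝ (Set.range fun b => (Fin.cons 1 (q b) : Fin (d+1) → ℝ))
        ≤ LinearMap.ker φ := by
      rw [Submodule.span_le]
      rintro _ ⟨b, rfl⟩
      exact hker b
    rw [span_cons_top d q haff] at h1
    exact LinearMap.mem_ker.mp (h1 (Submodule.mem_top))
  have hu0 : ∀ j, u j = 0 := by
    have h2 := htop u
    rw [hφapp] at h2
    intro j
    have h3 : ∀ j ∈ Finset.univ, (0:ℝ) ≤ u j * u j := fun j _ => mul_self_nonneg _
    have := (Finset.sum_eq_zero_iff_of_nonneg h3).mp h2 j (Finset.mem_univ j)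
    exact mul_self_eq_zero.mp this
  ext j
  have := hu0 j
  rw [hu] at this
  simpa [sub_eq_zero] using this

lemma convex_polarDual {d : ℕ} (S : Set (Fin d → ℝ)) : Convex ℝ (polarDual S) := by
  intro v1 h1 v2 h2 α β hα hβ hαβ
  intro y hy
  have e1 := h1 y hy
  have e2 := h2 y hy
  have : ∑ i, (α • v1 + β • v2) i * y i = α * ∑ i, v1 i * y i + β * ∑ i, v2 i * y i := by
    rw [Finset.mul_sum, Finset.mul_sum, ← Finset.sum_add_distrib]
    apply Finset.sum_congr rfl
    intro i _
    simp only [Pi.add_apply, Pi.smul_apply, smul_eq_mul]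
    ring
  rw [this]
  nlinarith

lemma isLinearMap_dot {d : ℕ} (u : Fin d → ℝ) :
    IsLinearMap ℝ (fun y : Fin d → ℝ => ∑ j, u j * y j) := by
  constructor
  · intro y z
    rw [← Finset.sum_add_distrib]
    apply Finset.sum_congr rfl
    intro j _
    simp only [Pi.add_apply]
    ring
  · intro r y
    simp only [smul_eq_mul, Finset.mul_sum]
    apply Finset.sum_congr rfl
    intro j _
    simp only [Pi.smul_apply, smul_eq_mul]
    ring

/-- dual volume of a simplex containing the origin in its
interior. -/
theorem dual_volume_simplex (d : ℕ) (q : Fin (d + 1) → (Fin d → ℝ))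
    (haff : AffineIndependent ℝ q)
    (P : Set (Fin d → ℝ)) (hP : P = convexHull ℝ (Set.range q))
    (h0 : (0 : Fin d → ℝ) ∈ interior P)
    (v : Fin (d + 1) → (Fin d → ℝ)) (c : Fin (d + 1) → ℝ)
    (hfacet : ∀ a b, b ≠ a → (∑ j, v a j * q b j) = -(c a))
    (hvert : ∀ a, (∑ j, v a j * q a j) > -(c a)) :
    (∀ a, 0 < c a) ∧
    (d.factorial : ℝ) * (volume (polarDual P)).toReal =
      |(Matrix.of fun a : Fin (d + 1) => Fin.cons (c a) (v a)).det| / ∏ a, c a := by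
  subst hP
  -- the affine function y ↦ ⟨v a, y⟩ + c a is nonnegative on P
  have hfge : ∀ a, ∀ y ∈ convexHull ℝ (Set.range q), -(c a) ≤ ∑ j, v a j * y j := by
    intro a
    intro y hy
    refine convexHull_min ?_ (convex_halfSpace_ge (isLinearMap_dot (v a)) (-(c a))) hy
    rintro z ⟨b, rfl⟩
    show -(c a) ≤ ∑ j, v a j * q b j
    by_cases hb : b = a
    · subst hb; exact le_of_lt (hvert b)
    · rw [hfacet a b hb]
  -- positivity of c
  have hcpos : ∀ a, 0 < c a := by
    intro a
    by_cases hv : v a = 0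
    · have := hvert a
      rw [hv] at this
      simp only [Pi.zero_apply, zero_mul, Finset.sum_const_zero] at this
      linarith
    · have hvsq : 0 < ∑ j, v a j * v a j := by
        rcases Function.ne_iff.mp hv with ⟨j0, hj0⟩
        refine Finset.sum_pos' (fun j _ => mul_self_nonneg _)
          ⟨j0, Finset.mem_univ _, ?_⟩
        have : v a j0 ≠ 0 := hj0
        exact mul_self_pos.mpr this
      obtain ⟨ε, hε, hball⟩ := Metric.mem_nhds_iff.mp (mem_interior_iff_mem_nhds.mp h0)
      set δ : ℝ := ε / (2 * (‖v a‖ + 1)) with hδdef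
      have hδ : 0 < δ := by positivity
      have hymem : -(δ • v a) ∈ convexHull ℝ (Set.range q) := by
        apply hball
        rw [Metric.mem_ball, dist_zero_right, norm_neg, norm_smul, Real.norm_eq_abs,
          abs_of_pos hδ]
        have hvn : (0:ℝ) ≤ ‖v a‖ := norm_nonneg _
        rw [hδdef]
        rw [div_mul_eq_mul_div, div_lt_iff₀ (by positivity)]
        nlinarith
      have hle := hfge a _ hymem
      have : ∑ j, v a j * (-(δ • v a)) j = -(δ * ∑ j, v a j * v a j) := by
        rw [Finset.mul_sum, ← Finset.sum_neg_distrib]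
        apply Finset.sum_congr rfl
        intro j _
        simp only [Pi.neg_apply, Pi.smul_apply, smul_eq_mul]
        ring
      rw [this] at hle
      nlinarith
  refine ⟨hcpos, ?_⟩
  set w : Fin (d+1) → (Fin d → ℝ) := fun a => (c a)⁻¹ • v a with hw
  have hwq : ∀ a b, b ≠ a → ∑ i, w a i * q b i = -1 := by
    intro a b hb
    have : ∑ i, w a i * q b i = (c a)⁻¹ * ∑ i, v a i * q b i := by
      rw [Finset.mul_sum]
      apply Finset.sum_congr rfl
      intro i _
      simp only [hw, Pi.smul_apply, smul_eq_mul]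
      ring
    rw [this, hfacet a b hb, mul_neg, inv_mul_cancel₀ (hcpos a).ne']
  set e : Fin (d+1) → ℝ := fun a => 1 + ∑ i, w a i * q a i with he
  have hepos : ∀ a, 0 < e a := by
    intro a
    have h1 : ∑ i, w a i * q a i = (c a)⁻¹ * ∑ i, v a i * q a i := by
      rw [Finset.mul_sum]
      apply Finset.sum_congr rfl
      intro i _
      simp only [hw, Pi.smul_apply, smul_eq_mul]
      ring
    have h2 := hvert a
    have h3 := hcpos a
    rw [he]
    simp only
    rw [h1]
    have h4 : 1 + (c a)⁻¹ * ∑ i, v a i * q a i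
        = (c a)⁻¹ * (c a + ∑ i, v a i * q a i) := by
      field_simp
    rw [h4]
    apply mul_pos (by positivity)
    linarith
  -- polar dual equals hull of w
  have hPol : polarDual (convexHull ℝ (Set.range q)) = convexHull ℝ (Set.range w) := by
    apply le_antisymm
    · -- hard direction
      intro x hx
      have hQb : ∀ b, -1 ≤ ∑ i, x i * q b i := fun b =>
        hx (q b) (subset_convexHull ℝ _ ⟨b, rfl⟩)
      set μ : Fin (d+1) → ℝ := fun a => (1 + ∑ i, x i * q a i) * (e a)⁻¹ with hμ
      have hμ0 : ∀ a, 0 ≤ μ a := by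
        intro a
        have := hQb a
        have := hepos a
        rw [hμ]
        have h1 : 0 ≤ 1 + ∑ i, x i * q a i := by linarith
        positivity
      have hkey : (Fin.cons (∑ a, μ a) (fun i => ∑ a, μ a * w a i) : Fin (d+1) → ℝ)
          = Fin.cons 1 x := by
        apply eq_of_dot d q haff
        intro b
        have expand : ∀ (s : ℝ) (z : Fin d → ℝ),
            ∑ j, (Fin.cons s z : Fin (d+1) → ℝ) j * (Fin.cons 1 (q b) : Fin (d+1) → ℝ) j
              = s + ∑ i, z i * q b i := by
          intro s z
          rw [Fin.sum_univ_succ]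
          simp
        rw [expand, expand]
        have hswap : ∑ i, (∑ a, μ a * w a i) * q b i
            = ∑ a, μ a * ∑ i, w a i * q b i := by
          calc ∑ i, (∑ a, μ a * w a i) * q b i
              = ∑ i, ∑ a, μ a * (w a i * q b i) := by
                refine Finset.sum_congr rfl fun i _ => ?_
                rw [Finset.sum_mul]
                exact Finset.sum_congr rfl fun a _ => by ring
            _ = ∑ a, ∑ i, μ a * (w a i * q b i) := Finset.sum_comm
            _ = ∑ a, μ a * ∑ i, w a i * q b i := by
                exact Finset.sum_congr rfl fun a _ => by rw [Finset.mul_sum]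
        rw [hswap]
        have hcombine : (∑ a, μ a) + ∑ a, μ a * ∑ i, w a i * q b i
            = ∑ a, μ a * (1 + ∑ i, w a i * q b i) := by
          rw [← Finset.sum_add_distrib]
          exact Finset.sum_congr rfl fun a _ => by ring
        rw [hcombine]
        have hterm : ∀ a, μ a * (1 + ∑ i, w a i * q b i)
            = if a = b then 1 + ∑ i, x i * q b i else 0 := by
          intro a
          by_cases hab : a = b
          · subst hab
            rw [if_pos rfl]
            have heb : (1 + ∑ i, w a i * q a i) = e a := rfl
            rw [heb, hμ]
            simp only
            rw [mul_assoc, inv_mul_cancel₀ (hepos a).ne', mul_one]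
          · rw [if_neg hab, hwq a b (Ne.symm hab)]
            ring
        rw [Finset.sum_congr rfl fun a _ => hterm a, Finset.sum_ite_eq' Finset.univ b]
        simp
      have hsum1 : ∑ a, μ a = 1 := by
        have := congrFun hkey 0
        simpa using this
      have hxeq : ∀ i, ∑ a, μ a * w a i = x i := by
        intro i
        have := congrFun hkey i.succ
        simpa using this
      have hcm := Finset.centerMass_mem_convexHull (Finset.univ : Finset (Fin (d+1)))
        (w := μ) (z := w) (fun a _ => hμ0 a)
        (by rw [hsum1]; norm_num) (fun a _ => Set.mem_range_self a)
      have hcmx : Finset.univ.centerMass μ w = x := by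
        rw [Finset.centerMass, hsum1, inv_one, one_smul]
        ext i
        rw [← hxeq i]
        simp only [Finset.sum_apply, Pi.smul_apply, smul_eq_mul]
      rwa [hcmx] at hcm
    · -- easy direction
      apply convexHull_min _ (convex_polarDual _)
      rintro _ ⟨a, rfl⟩
      intro y hy
      refine convexHull_min ?_
        (convex_halfSpace_ge (isLinearMap_dot (w a)) (-1)) hy
      rintro z ⟨b, rfl⟩
      show -1 ≤ ∑ j, w a j * q b j
      by_cases hb : b = a
      · subst hb
        have := hepos b
        rw [he] at this
        simp only at this
        linarith
      · rw [hwq a b hb]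
  rw [hPol, volume_simplex d w, ENNReal.toReal_ofReal (by positivity)]
  have hdet1 : |(Matrix.of fun a : Fin (d + 1) => Fin.cons (c a) (v a)).det|
      = (∏ a, c a) *
        |(Matrix.of fun a : Fin (d+1) => (Fin.cons 1 (w a) : Fin (d+1) → ℝ)).det| := by
    have hM : (Matrix.of fun a : Fin (d + 1) => Fin.cons (c a) (v a))
        = Matrix.of (fun a b => c a *
            (Matrix.of fun a : Fin (d+1) => (Fin.cons 1 (w a) : Fin (d+1) → ℝ)) a b) := by
      ext a b
      rcases Fin.eq_zero_or_eq_succ b with rfl | ⟨j, rfl⟩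
      · simp
      · simp only [Matrix.of_apply, Fin.cons_succ, hw, Pi.smul_apply, smul_eq_mul]
        rw [← mul_assoc, mul_inv_cancel₀ (hcpos a).ne', one_mul]
    rw [hM, Matrix.det_mul_column, abs_mul, abs_of_pos (Finset.prod_pos fun a _ => hcpos a)]
  rw [det_cons_one d w] at hdet1
  rw [hdet1]
  have hfac : (0:ℝ) < d.factorial := by positivity
  have hprod : (0:ℝ) < ∏ a, c a := Finset.prod_pos fun a _ => hcpos a
  field_simp
end

section
/- Let G be a finite tree (connected acyclic simple graph) on a vertex set which is the disjoint union U ⊔ V, such that every edge of G has one endpoint in U and one in V, and V is nonempty. For an edge {u, v} of G with u ∈ U and v ∈ V, let h_{u,v} ∈ ℝ^V be the vector whose coordinate at v' ∈ V equals 1 if v' lies in the connected component of v in the graph obtained from G by deleting the vertex u, and 0 otherwise. Suppose that for each u ∈ U a subset S_u of the neighbor set of u is chosen with |S_u| = deg(u) − 1. Then the collection { h_{u,v} : u ∈ U, v ∈ S_u } together with the all-ones vector 𝟙 ∈ ℝ^V consists of exactly |V| vectors, and the |V| × |V| matrix formed by these vectors has determinant equal to 1 or −1. -/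
open SimpleGraph Finset

section Aux

lemma tree_pen {α : Type} [DecidableEq α] {G : SimpleGraph α} (hT : G.IsTree)
    {x a : α} (hxa : x ≠ a) :
    ∃ b0 : α, G.Adj a b0 ∧ (∃ q : G.Walk x b0, a ∉ q.support) ∧
      (∀ c, G.Adj a c → ((∃ q : G.Walk x c, a ∉ q.support) ↔ c = b0)) ∧
      (∀ c, G.Adj a c → ((∃ q : G.Walk x a, c ∉ q.support) ↔ c ≠ b0)) := by
  obtain ⟨P, hP, hPuniq⟩ := hT.existsUnique_path x a
  obtain ⟨P', hP', hP'uniq⟩ := hT.existsUnique_path a x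
  obtain ⟨b0, e0, Q, hrev⟩ := Walk.exists_eq_cons_of_ne (Ne.symm hxa) P.reverse
  have hPrevPath : P.reverse.IsPath := hP.reverse
  rw [hrev, Walk.cons_isPath_iff] at hPrevPath
  obtain ⟨hQpath, haQ⟩ := hPrevPath
  have hb0P : b0 ∈ P.support := by
    have : b0 ∈ P.reverse.support := by
      rw [hrev, Walk.support_cons]
      exact List.mem_cons_of_mem _ Q.start_mem_support
    rwa [Walk.support_reverse, List.mem_reverse] at this
  refine ⟨b0, e0, ⟨Q.reverse, by rw [Walk.support_reverse]; simpa using haQ⟩, ?_, ?_⟩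
  · intro c hc
    constructor
    · rintro ⟨q, hq⟩
      set R := q.bypass with hR
      have hRpath : R.IsPath := q.bypass_isPath
      have haR : a ∉ R.support := fun hmem => hq (q.support_bypass_subset hmem)
      have hW1 : (Walk.cons hc R.reverse).IsPath := by
        rw [Walk.cons_isPath_iff]
        exact ⟨hRpath.reverse, by rwa [Walk.support_reverse, List.mem_reverse]⟩
      have hW2 : ((Walk.cons e0 Q) : G.Walk a x).IsPath := by
        rw [Walk.cons_isPath_iff]; exact ⟨hQpath, haQ⟩
      have heq : (Walk.cons hc R.reverse) = (Walk.cons e0 Q : G.Walk a x) := by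
        rw [hP'uniq _ hW1, hP'uniq _ hW2]
      have hsup := congrArg Walk.support heq
      simp only [Walk.support_cons] at hsup
      have h1 : R.reverse.support = Q.support := by injection hsup
      rw [Walk.support_eq_cons R.reverse, Walk.support_eq_cons Q] at h1
      injection h1
    · rintro rfl
      exact ⟨Q.reverse, by rw [Walk.support_reverse]; simpa using haQ⟩
  · intro c hc
    constructor
    · rintro ⟨q, hq⟩ rfl
      have hqP : q.bypass = P := hPuniq _ q.bypass_isPath
      exact hq (q.support_bypass_subset (hqP ▸ hb0P))
    · intro hcb
      refine ⟨P, fun hmem => ?_⟩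
      have hca : c ≠ a := (G.ne_of_adj hc).symm
      have hcQ : c ∈ Q.support := by
        have : c ∈ P.reverse.support := by rwa [Walk.support_reverse, List.mem_reverse]
        rw [hrev, Walk.support_cons, List.mem_cons] at this
        rcases this with h | h
        · exact absurd h hca
        · exact h
      set T := Q.takeUntil c hcQ with hT'
      have hTpath : T.IsPath := hQpath.takeUntil hcQ
      have haT : a ∉ T.support := fun hm => haQ (Q.support_takeUntil_subset hcQ hm)
      have hW1 : (Walk.cons e0 T).IsPath := by
        rw [Walk.cons_isPath_iff]; exact ⟨hTpath, haT⟩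
      have hW2 : (Walk.cons hc (Walk.nil : G.Walk c c)).IsPath := by
        rw [Walk.cons_isPath_iff]
        exact ⟨Walk.IsPath.nil, by simp; exact fun h => hca h.symm⟩
      obtain ⟨P'', hP'', hP''uniq⟩ := hT.existsUnique_path a c
      have heq : Walk.cons e0 T = Walk.cons hc (Walk.nil : G.Walk c c) := by
        rw [hP''uniq _ hW1, hP''uniq _ hW2]
      have hsup := congrArg Walk.support heq
      simp only [Walk.support_cons, Walk.support_nil] at hsup
      have h1 : T.support = [c] := by injection hsup
      rw [Walk.support_eq_cons T] at h1
      have : b0 = c := by injection h1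
      exact hcb this.symm

variable {U V : Type} [Fintype U] [Fintype V] [DecidableEq U] [DecidableEq V]
  {G : SimpleGraph (U ⊕ V)} [DecidableRel G.Adj]

omit [Fintype U] [Fintype V] [DecidableRel G.Adj] in
lemma factA (hT : G.IsTree)
    (hbipU : ∀ u u' : U, ¬ G.Adj (Sum.inl u) (Sum.inl u')) (u : U) (j : V) :
    ∃! v : V, G.Adj (Sum.inl u) (Sum.inr v) ∧
      ∃ q : G.Walk (Sum.inr j) (Sum.inr v), Sum.inl u ∉ q.support := by
  obtain ⟨b0, hadj, hex, hiff, -⟩ := tree_pen hT (x := Sum.inr j) (a := Sum.inl u) (by simp)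
  cases b0 with
  | inl u' => exact absurd hadj (hbipU u u')
  | inr v0 =>
    refine ⟨v0, ⟨hadj, hex⟩, fun v ⟨hv1, hv2⟩ => ?_⟩
    exact Sum.inr_injective ((hiff (Sum.inr v) hv1).mp hv2)

omit [Fintype U] [Fintype V] [DecidableRel G.Adj] in
lemma factB (hT : G.IsTree)
    (hbipV : ∀ v v' : V, ¬ G.Adj (Sum.inr v) (Sum.inr v')) (v' j : V) (hj : j ≠ v') :
    ∃! u : U, G.Adj (Sum.inl u) (Sum.inr v') ∧
      ¬ ∃ q : G.Walk (Sum.inr j) (Sum.inr v'), Sum.inl u ∉ q.support := by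
  obtain ⟨b0, hadj, -, -, hiff⟩ := tree_pen hT (x := Sum.inr j) (a := Sum.inr v')
    (fun hc => hj (Sum.inr_injective hc))
  cases b0 with
  | inr w => exact absurd hadj (hbipV v' w)
  | inl u0 =>
    refine ⟨u0, ⟨hadj.symm, fun hex => ?_⟩, fun u ⟨hu1, hu2⟩ => ?_⟩
    · exact ((hiff (Sum.inl u0) hadj).mp hex) rfl
    · by_contra hne
      exact hu2 ((hiff (Sum.inl u) hu1.symm).mpr
        (fun hc => hne (Sum.inl_injective hc)))

variable (G) in
lemma deg_inl_eq (hbipU : ∀ u u' : U, ¬ G.Adj (Sum.inl u) (Sum.inl u')) (u : U) :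
    G.degree (Sum.inl u) = (univ.filter fun v : V => G.Adj (Sum.inl u) (Sum.inr v)).card := by
  rw [← card_neighborFinset_eq_degree]
  have : G.neighborFinset (Sum.inl u) =
      (univ.filter fun v : V => G.Adj (Sum.inl u) (Sum.inr v)).image Sum.inr := by
    ext b
    cases b with
    | inl u' => simp [hbipU u u']
    | inr v => simp
  rw [this, card_image_of_injective _ Sum.inr_injective]

variable (G) in
lemma deg_inr_eq (hbipV : ∀ v v' : V, ¬ G.Adj (Sum.inr v) (Sum.inr v')) (v : V) :
    G.degree (Sum.inr v) = (univ.filter fun u : U => G.Adj (Sum.inl u) (Sum.inr v)).card := by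
  rw [← card_neighborFinset_eq_degree]
  have : G.neighborFinset (Sum.inr v) =
      (univ.filter fun u : U => G.Adj (Sum.inl u) (Sum.inr v)).image Sum.inl := by
    ext b
    cases b with
    | inl u => simp [G.adj_comm]
    | inr v' => simp [hbipV v v']
  rw [this, card_image_of_injective _ Sum.inl_injective]

variable (G) in
lemma sum_deg_U (hbipU : ∀ u u' : U, ¬ G.Adj (Sum.inl u) (Sum.inl u'))
    (hbipV : ∀ v v' : V, ¬ G.Adj (Sum.inr v) (Sum.inr v')) :
    ∑ u : U, G.degree (Sum.inl u) = G.edgeFinset.card := by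
  have hU : ∑ u : U, G.degree (Sum.inl u)
      = Fintype.card {p : U × V // G.Adj (Sum.inl p.1) (Sum.inr p.2)} := by
    rw [Fintype.card_congr (Equiv.subtypeProdEquivSigmaSubtype
      (fun u v => G.Adj (Sum.inl u) (Sum.inr v))), Fintype.card_sigma]
    exact Finset.sum_congr rfl fun u _ => by
      rw [deg_inl_eq G hbipU u, Fintype.card_subtype]
  have hV : ∑ v : V, G.degree (Sum.inr v)
      = Fintype.card {p : U × V // G.Adj (Sum.inl p.1) (Sum.inr p.2)} := by
    have e1 : {p : U × V // G.Adj (Sum.inl p.1) (Sum.inr p.2)}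
        ≃ {q : V × U // G.Adj (Sum.inl q.2) (Sum.inr q.1)} :=
      (Equiv.prodComm U V).subtypeEquiv (fun p => by simp)
    rw [Fintype.card_congr e1, Fintype.card_congr (Equiv.subtypeProdEquivSigmaSubtype
      (fun (v : V) (u : U) => G.Adj (Sum.inl u) (Sum.inr v))), Fintype.card_sigma]
    exact Finset.sum_congr rfl fun v _ => by
      rw [deg_inr_eq G hbipV v, Fintype.card_subtype]
  have htot := G.sum_degrees_eq_twice_card_edges
  rw [Fintype.sum_sum_type] at htot
  omega

variable (G) in
lemma deg_pos (hT : G.IsTree) [Nonempty V] (u : U) : 0 < G.degree (Sum.inl u) := by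
  obtain ⟨v⟩ := ‹Nonempty V›
  obtain ⟨w⟩ := hT.isConnected.preconnected (Sum.inl u) (Sum.inr v)
  obtain ⟨b, hadj, -, -⟩ := Walk.exists_eq_cons_of_ne (by simp) w
  rw [G.degree_pos_iff_exists_adj]
  exact ⟨b, hadj⟩

variable (G) in
lemma card_index (hT : G.IsTree) [Nonempty V]
    (hbipU : ∀ u u' : U, ¬ G.Adj (Sum.inl u) (Sum.inl u'))
    (hbipV : ∀ v v' : V, ¬ G.Adj (Sum.inr v) (Sum.inr v'))
    (S : U → Finset V)
    (hS2 : ∀ u, (S u).card = G.degree (Sum.inl u) - 1) :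
    Fintype.card ((Σ u : U, {v // v ∈ S u}) ⊕ Unit) = Fintype.card V := by
  have hE := hT.card_edgeFinset
  rw [Fintype.card_sum] at hE
  have hsum := sum_deg_U G hbipU hbipV
  have hpos := fun u => deg_pos G hT u
  have h1 : ∑ u : U, ((S u).card + 1) = ∑ u : U, G.degree (Sum.inl u) := by
    refine Finset.sum_congr rfl fun u _ => ?_
    rw [hS2 u]
    have := hpos u; omega
  rw [Finset.sum_add_distrib, Finset.sum_const, smul_eq_mul, mul_one,
    Finset.card_univ] at h1
  have hcard : Fintype.card ((Σ u : U, {v // v ∈ S u}) ⊕ Unit)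
      = (∑ u : U, (S u).card) + 1 := by
    rw [Fintype.card_sum, Fintype.card_sigma, Fintype.card_unit]
    congr 1
    exact Finset.sum_congr rfl fun u _ => Fintype.card_coe (S u)
  omega

end Aux

/-- the matrix formed by the vectors `h_{u,v}` (over chosen
neighbor sets of size `deg u − 1`) together with the all-ones vector has
determinant `±1`. -/
theorem bipartite_tree_determinant (U V : Type) [Fintype U] [Fintype V]
    [DecidableEq U] [DecidableEq V] [Nonempty V]
    (G : SimpleGraph (U ⊕ V)) [DecidableRel G.Adj]
    (hT : G.IsTree)
    (hbipU : ∀ u u' : U, ¬ G.Adj (Sum.inl u) (Sum.inl u'))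
    (hbipV : ∀ v v' : V, ¬ G.Adj (Sum.inr v) (Sum.inr v'))
    (h : U → V → V → ℝ)
    (hh : ∀ u v v', h u v v' =
      @ite ℝ (∃ p : G.Walk (Sum.inr v') (Sum.inr v), Sum.inl u ∉ p.support)
        (Classical.propDecidable _) 1 0)
    (S : U → Finset V)
    (hS1 : ∀ u, ∀ v ∈ S u, G.Adj (Sum.inl u) (Sum.inr v))
    (hS2 : ∀ u, (S u).card = G.degree (Sum.inl u) - 1) :
    Fintype.card ((Σ u : U, {v // v ∈ S u}) ⊕ Unit) = Fintype.card V ∧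
    ∀ e : ((Σ u : U, {v // v ∈ S u}) ⊕ Unit) ≃ V,
      ((Matrix.of fun (i : V) (j : V) =>
          Sum.elim (fun s : Σ u : U, {v // v ∈ S u} => h s.1 s.2 j)
            (fun _ => (1:ℝ)) (e.symm i)).det = 1 ∨
       (Matrix.of fun (i : V) (j : V) =>
          Sum.elim (fun s : Σ u : U, {v // v ∈ S u} => h s.1 s.2 j)
            (fun _ => (1:ℝ)) (e.symm i)).det = -1) := by
  classical
  refine ⟨card_index G hT hbipU hbipV S hS2, fun e => ?_⟩
  -- integer indicator function
  set H : U → V → V → ℤ := fun u v j =>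
    @ite ℤ (∃ p : G.Walk (Sum.inr j) (Sum.inr v), Sum.inl u ∉ p.support)
      (Classical.propDecidable _) 1 0
    with hHdef
  have hH1 : ∀ u v j, (∃ p : G.Walk (Sum.inr j) (Sum.inr v), Sum.inl u ∉ p.support) →
      H u v j = 1 := fun u v j hp => if_pos hp
  have hH0 : ∀ u v j, ¬ (∃ p : G.Walk (Sum.inr j) (Sum.inr v), Sum.inl u ∉ p.support) →
      H u v j = 0 := fun u v j hp => if_neg hp
  have hHcast : ∀ u v j, h u v j = ((H u v j : ℤ) : ℝ) := by
    intro u v j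
    rw [hh]
    rcases Classical.em (∃ p : G.Walk (Sum.inr j) (Sum.inr v), Sum.inl u ∉ p.support)
      with hp | hp
    · rw [if_pos hp, hH1 u v j hp]; norm_num
    · rw [if_neg hp, hH0 u v j hp]; norm_num
  set Nm : Matrix V V ℤ := Matrix.of fun i j =>
    Sum.elim (fun s : Σ u : U, {v // v ∈ S u} => H s.1 s.2 j) (fun _ => (1:ℤ))
      (e.symm i) with hNmdef
  have hMcast : (Matrix.of fun (i : V) (j : V) =>
      Sum.elim (fun s : Σ u : U, {v // v ∈ S u} => h s.1 s.2 j)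
        (fun _ => (1:ℝ)) (e.symm i)) = Nm.map (Int.cast : ℤ → ℝ) := by
    ext i j
    rw [hNmdef]
    simp only [Matrix.map_apply, Matrix.of_apply]
    generalize e.symm i = w
    cases w with
    | inl s => simp [hHcast]
    | inr t => simp
  have hdet : ((Nm.det : ℤ) : ℝ) = (Nm.map (Int.cast : ℤ → ℝ)).det := by
    have := RingHom.map_det (Int.castRingHom ℝ) Nm
    rwa [RingHom.mapMatrix_apply, Int.coe_castRingHom] at this
  rw [hMcast]
  suffices hNdet : Nm.det = 1 ∨ Nm.det = -1 by
    rcases hNdet with h1 | h1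
    · left; rw [← hdet, h1]; norm_num
    · right; rw [← hdet, h1]; norm_num
  -- the inverse matrix
  set Cf : V → ((Σ u : U, {v // v ∈ S u}) ⊕ Unit) → ℤ := fun v' w =>
    Sum.elim (fun s : Σ u : U, {v // v ∈ S u} =>
        if G.Adj (Sum.inl s.1) (Sum.inr v') then
          (if v' ∈ S s.1 then (if (s.2 : V) = v' then 1 else 0) else -1) else 0)
      (fun _ => 1 - (((univ.filter fun u : U => G.Adj (Sum.inl u) (Sum.inr v')).filter
          fun u => v' ∈ S u).card : ℤ)) w with hCfdef
  set Cm : Matrix V V ℤ := Matrix.of fun v' i => Cf v' (e.symm i) with hCmdef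
  have hCN : Cm * Nm = 1 := by
    ext v' j
    rw [Matrix.mul_apply, Matrix.one_apply]
    have hre : ∑ i : V, Cm v' i * Nm i j
        = ∑ w : (Σ u : U, {v // v ∈ S u}) ⊕ Unit, Cf v' w *
            (Sum.elim (fun s : Σ u : U, {v // v ∈ S u} => H s.1 s.2 j)
              (fun _ => (1:ℤ)) w) :=
      Fintype.sum_equiv e.symm _ _ (fun i => rfl)
    rw [hre, Fintype.sum_sum_type, ← Finset.univ_sigma_univ, Finset.sum_sigma]
    simp only [hCfdef, Sum.elim_inl, Sum.elim_inr]
    -- notation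
    set k : Finset U := univ.filter fun u : U => G.Adj (Sum.inl u) (Sum.inr v') with hkdef
    have hABk : (k.filter fun u => v' ∈ S u).card
        + (k.filter fun u => ¬ v' ∈ S u).card = k.card :=
      Finset.card_filter_add_card_filter_not _
    -- inner sums
    have hin : ∀ u : U, (∑ v : {v // v ∈ S u},
        (if G.Adj (Sum.inl u) (Sum.inr v') then
          (if v' ∈ S u then (if (v : V) = v' then 1 else 0) else -1) else 0) * H u (v : V) j)
        = (if G.Adj (Sum.inl u) (Sum.inr v') then H u v' j else 0)
          - (if G.Adj (Sum.inl u) (Sum.inr v') ∧ v' ∉ S u then 1 else 0) := by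
      intro u
      rw [Finset.sum_coe_sort (S u) (fun v =>
        (if G.Adj (Sum.inl u) (Sum.inr v') then
          (if v' ∈ S u then (if v = v' then 1 else 0) else -1) else 0) * H u v j)]
      by_cases hadj : G.Adj (Sum.inl u) (Sum.inr v')
      · by_cases hmem : v' ∈ S u
        · rw [if_pos hadj, if_neg (fun hc => hc.2 hmem), sub_zero]
          rw [Finset.sum_congr rfl (fun v _ => by
            rw [if_pos hadj, if_pos hmem, ite_mul, one_mul, zero_mul])]
          rw [Finset.sum_ite_eq' (S u) v' (fun v => H u v j), if_pos hmem]
        · rw [if_pos hadj, if_pos ⟨hadj, hmem⟩]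
          rw [Finset.sum_congr rfl (fun v _ => by
            rw [if_pos hadj, if_neg hmem, neg_one_mul])]
          rw [Finset.sum_neg_distrib]
          -- ∑ v in S u, H u v j = 1 - H u v' j
          have hNu : insert v' (S u) = univ.filter fun v : V =>
              G.Adj (Sum.inl u) (Sum.inr v) := by
            apply Finset.eq_of_subset_of_card_le
            · rw [Finset.insert_subset_iff]
              exact ⟨Finset.mem_filter.mpr ⟨Finset.mem_univ _, hadj⟩,
                fun v hv => Finset.mem_filter.mpr ⟨Finset.mem_univ _, hS1 u v hv⟩⟩
            · rw [Finset.card_insert_of_notMem hmem, hS2 u, deg_inl_eq G hbipU u]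
              have hge : 0 < (univ.filter fun v : V =>
                  G.Adj (Sum.inl u) (Sum.inr v)).card :=
                Finset.card_pos.mpr ⟨v', Finset.mem_filter.mpr ⟨Finset.mem_univ _, hadj⟩⟩
              omega
          have hsumNu : ∑ v ∈ (univ.filter fun v : V =>
              G.Adj (Sum.inl u) (Sum.inr v)), H u v j = 1 := by
            obtain ⟨v0, ⟨hv0adj, hv0w⟩, hv0uniq⟩ := factA hT hbipU u j
            rw [Finset.sum_eq_single_of_mem v0
              (Finset.mem_filter.mpr ⟨Finset.mem_univ _, hv0adj⟩)
              (fun b hb hne => hH0 _ _ _ (fun hw =>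
                hne (hv0uniq b ⟨(Finset.mem_filter.mp hb).2, hw⟩)))]
            exact hH1 _ _ _ hv0w
          rw [← hNu, Finset.sum_insert hmem] at hsumNu
          omega
      · rw [if_neg hadj, if_neg (fun hc => hadj hc.1)]
        rw [Finset.sum_congr rfl (fun v _ => by rw [if_neg hadj, zero_mul])]
        simp
    rw [Finset.sum_congr rfl (fun u _ => hin u), Finset.sum_sub_distrib]
    rw [← Finset.sum_filter (fun u => G.Adj (Sum.inl u) (Sum.inr v')) (fun u => H u v' j),
      ← hkdef]
    have hB : ∑ u : U, (if G.Adj (Sum.inl u) (Sum.inr v') ∧ v' ∉ S u then (1:ℤ) else 0)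
        = ((k.filter fun u => ¬ v' ∈ S u).card : ℤ) := by
      rw [Finset.sum_boole]
      congr 1
      rw [hkdef, Finset.filter_filter]
    rw [hB]
    simp only [Finset.univ_unique, Finset.sum_singleton, mul_one]
    by_cases hvj : v' = j
    · subst hvj
      rw [if_pos rfl]
      have hall : ∑ u ∈ k, H u v' v' = (k.card : ℤ) := by
        rw [Finset.sum_congr rfl (fun u _ => hH1 u v' v' ⟨Walk.nil, by simp⟩)]
        simp
      rw [hall]
      push_cast
      omega
    · rw [if_neg hvj]
      obtain ⟨u0, ⟨hu0adj, hu0no⟩, hu0uniq⟩ :=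
        factB hT hbipV v' j (fun hc => hvj hc.symm)
      have hone : ∑ u ∈ k, (1 - H u v' j) = 1 := by
        rw [Finset.sum_eq_single_of_mem u0
          (Finset.mem_filter.mpr ⟨Finset.mem_univ _, hu0adj⟩)
          (fun b hb hne => by
            have hbadj := (Finset.mem_filter.mp hb).2
            have hb1 : H b v' j = 1 :=
              hH1 _ _ _ (Classical.byContradiction
                (fun hno => hne (hu0uniq b ⟨hbadj, hno⟩)))
            rw [hb1]; ring)]
        rw [hH0 _ _ _ hu0no]; ring
      rw [Finset.sum_sub_distrib, Finset.sum_const, nsmul_eq_mul, mul_one] at hone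
      push_cast at hone ⊢
      omega
  have hdet1 : Nm.det * Cm.det = 1 := by
    rw [mul_comm, ← Matrix.det_mul, hCN, Matrix.det_one]
  exact Int.isUnit_iff.mp (IsUnit.of_mul_eq_one _ hdet1)
end

section
/- (Dual volume of a parallelotope.) Let p_1, …, p_d be a basis of ℝ^d and let v_1, …, v_d be the dual basis, i.e. ⟨p_i, v_j⟩ = δ_{ij}. Let x_1, …, x_d > 0 and let P = x_1·[−p_1/2, p_1/2] + ⋯ + x_d·[−p_d/2, p_d/2] be the Minkowski sum of the segments [−p_i/2, p_i/2] scaled by x_i. Let z ∈ ℝ^d satisfy |⟨z, v_i⟩| < x_i/2 for all i (equivalently, z lies in the interior of P). Then d! · λ( (P − z)^∨ ) = |det(v_1, …, v_d)| · ( x_1 x_2 ⋯ x_d ) / ∏_{i=1}^{d} ( x_i^2/4 − ⟨z, v_i⟩^2 ). -/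
open MeasureTheory

lemma crossVol : ∀ (n : ℕ) (α β : Fin n → ℝ), (∀ i, 0 < α i) → (∀ i, 0 < β i) → ∀ r : ℝ, 0 ≤ r →
    volume {u : Fin n → ℝ | ∑ i, max (α i * u i) (-(β i * u i)) ≤ r} =
      ENNReal.ofReal (r ^ n * ((∏ i, (1 / α i + 1 / β i)) / (n.factorial : ℝ))) := by
  intro n
  induction n with
  | zero =>
    intro α β hα hβ r hr
    have : {u : Fin 0 → ℝ | ∑ i, max (α i * u i) (-(β i * u i)) ≤ r} = Set.univ := by
      ext u; simp [hr]
    rw [this]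
    simp [volume_pi, Measure.pi_univ]
  | succ n ih =>
    intro α β hα hβ r hr
    set g : Fin (n+1) → ℝ → ℝ := fun i a => max (α i * a) (-(β i * a)) with hg
    have hgc : ∀ i, Continuous (g i) := fun i =>
      (continuous_const.mul continuous_id).max (continuous_const.mul continuous_id).neg
    have hgnn : ∀ i a, 0 ≤ g i a := by
      intro i a
      rcases le_or_gt 0 a with h | h
      · exact le_max_of_le_left (mul_nonneg (hα i).le h)
      · exact le_max_of_le_right (by nlinarith [hβ i])
    set T : Set (ℝ × (Fin n → ℝ)) := {q | g 0 q.1 + ∑ i, g i.succ (q.2 i) ≤ r} with hT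
    have hTc : Continuous fun q : ℝ × (Fin n → ℝ) => g 0 q.1 + ∑ i, g i.succ (q.2 i) := by
      refine ((hgc 0).comp continuous_fst).add ?_
      exact continuous_finset_sum _ fun i _ => (hgc i.succ).comp ((continuous_apply i).comp continuous_snd)
    have hTmeas : MeasurableSet T := hTc.measurable measurableSet_Iic
    have hpre : (MeasurableEquiv.piFinSuccAbove (fun _ : Fin (n+1) => ℝ) 0) ⁻¹' T
        = {u : Fin (n+1) → ℝ | ∑ i, g i (u i) ≤ r} := by
      ext u
      simp [T, MeasurableEquiv.piFinSuccAbove, Fin.sum_univ_succ, Fin.tail]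
    have hmp := measurePreserving_piFinSuccAbove (fun _ : Fin (n+1) => (volume : Measure ℝ)) 0
    have hvol : volume {u : Fin (n+1) → ℝ | ∑ i, g i (u i) ≤ r}
        = ((volume : Measure ℝ).prod (Measure.pi fun _ : Fin n => (volume : Measure ℝ))) T := by
      rw [← hpre, volume_pi]
      exact hmp.measure_preimage hTmeas.nullMeasurableSet
    set C : ℝ := (∏ i : Fin n, (1 / α i.succ + 1 / β i.succ)) / (n.factorial : ℝ) with hC
    have hCnn : 0 ≤ C := div_nonneg (Finset.prod_nonneg fun i _ => by
      have := hα i.succ; have := hβ i.succ; positivity) (Nat.cast_nonneg _)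
    set l : ℝ := -(r / β 0) with hldef
    set m : ℝ := r / α 0 with hmdef
    have hl0 : l ≤ 0 := neg_nonpos.2 (div_nonneg hr (hβ 0).le)
    have h0m : 0 ≤ m := div_nonneg hr (hα 0).le
    have hgle : ∀ a ∈ Set.Icc l m, g 0 a ≤ r := by
      rintro a ⟨ha1, ha2⟩
      have h1 : α 0 * a ≤ r := by
        have := mul_le_mul_of_nonneg_left ha2 (hα 0).le
        rwa [show α 0 * (r / α 0) = r by rw [← mul_div_assoc]; exact mul_div_cancel_left₀ r (hα 0).ne'] at this
      have h2 : -(β 0 * a) ≤ r := by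
        have h : -a ≤ r / β 0 := by have h' := ha1; rw [hldef] at h'; linarith
        have := mul_le_mul_of_nonneg_left h (hβ 0).le
        rw [show β 0 * (r / β 0) = r by rw [← mul_div_assoc]; exact mul_div_cancel_left₀ r (hβ 0).ne'] at this
        linarith
      exact max_le h1 h2
    have hggt : ∀ a ∉ Set.Icc l m, r < g 0 a := by
      intro a ha
      rw [Set.mem_Icc, not_and_or, not_le, not_le] at ha
      rcases ha with h | h
      · have h'' := h
        rw [hldef] at h''
        have h' : r / β 0 < -a := by linarith
        have := mul_lt_mul_of_pos_left h' (hβ 0)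
        rw [show β 0 * (r / β 0) = r by rw [← mul_div_assoc]; exact mul_div_cancel_left₀ r (hβ 0).ne'] at this
        exact lt_max_of_lt_right (by linarith)
      · have := mul_lt_mul_of_pos_left h (hα 0)
        rw [show α 0 * (r / α 0) = r by rw [← mul_div_assoc]; exact mul_div_cancel_left₀ r (hα 0).ne'] at this
        exact lt_max_of_lt_left this
    have key : ∀ a : ℝ, (Measure.pi fun _ : Fin n => (volume : Measure ℝ)) (Prod.mk a ⁻¹' T)
        = Set.indicator (Set.Icc l m) (fun a => ENNReal.ofReal ((r - g 0 a) ^ n * C)) a := by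
      intro a
      have hsec : Prod.mk a ⁻¹' T = {u : Fin n → ℝ | ∑ i, g i.succ (u i) ≤ r - g 0 a} := by
        ext u; constructor <;> intro h <;> simp only [T, Set.mem_preimage, Set.mem_setOf_eq] at * <;> linarith
      by_cases ha : a ∈ Set.Icc l m
      · rw [hsec, Set.indicator_of_mem ha]
        have h := hgle a ha
        rw [← volume_pi]
        rw [ih (fun i => α i.succ) (fun i => β i.succ) (fun i => hα _) (fun i => hβ _) _ (by linarith)]
      · rw [Set.indicator_of_notMem ha, hsec]
        have hgt := hggt a ha
        have hempty : {u : Fin n → ℝ | ∑ i, g i.succ (u i) ≤ r - g 0 a} = ∅ := by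
          ext u
          simp only [Set.mem_setOf_eq, Set.mem_empty_iff_false, iff_false, not_le]
          have : 0 ≤ ∑ i, g i.succ (u i) := Finset.sum_nonneg fun i _ => hgnn _ _
          linarith
        rw [hempty]; simp
    rw [hvol, Measure.prod_apply hTmeas]
    simp_rw [key]
    rw [lintegral_indicator measurableSet_Icc]
    have hfc : Continuous fun a => (r - g 0 a) ^ n * C :=
      ((continuous_const.sub (hgc 0)).pow n).mul continuous_const
    have hint : IntegrableOn (fun a => (r - g 0 a) ^ n * C) (Set.Icc l m) :=
      hfc.integrableOn_Icc
    have hnn : 0 ≤ᵐ[volume.restrict (Set.Icc l m)] fun a => (r - g 0 a) ^ n * C := by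
      refine (ae_restrict_iff' measurableSet_Icc).2 (ae_of_all _ fun a ha => ?_)
      have := hgle a ha
      exact mul_nonneg (pow_nonneg (by linarith) n) hCnn
    rw [← ofReal_integral_eq_lintegral_ofReal hint hnn]
    have hlm : l ≤ m := le_trans hl0 h0m
    have hIcc : ∫ a in Set.Icc l m, (r - g 0 a) ^ n * C = ∫ a in l..m, (r - g 0 a) ^ n * C := by
      rw [intervalIntegral.integral_of_le hlm, integral_Icc_eq_integral_Ioc]
    have hii : ∀ a b : ℝ, IntervalIntegrable (fun a => (r - g 0 a) ^ n * C) volume a b :=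
      fun a b => hfc.intervalIntegrable a b
    have hsplit : (∫ a in l..m, (r - g 0 a) ^ n * C)
        = (∫ a in l..(0:ℝ), (r - g 0 a) ^ n * C) + ∫ a in (0:ℝ)..m, (r - g 0 a) ^ n * C :=
      (intervalIntegral.integral_add_adjacent_intervals (hii l 0) (hii 0 m)).symm
    have hI1 : (∫ a in l..(0:ℝ), (r - g 0 a) ^ n * C) = r ^ (n+1) / (β 0 * (n+1)) * C := by
      have hcong : Set.EqOn (fun a => (r - g 0 a) ^ n * C) (fun a => (r + β 0 * a) ^ n * C)
          (Set.uIcc l 0) := by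
        intro a ha
        rw [Set.uIcc_of_le hl0] at ha
        have h2 : a ≤ 0 := ha.2
        have hge : g 0 a = -(β 0 * a) := max_eq_right (by nlinarith [hα 0, hβ 0])
        simp only [hge, sub_neg_eq_add]
      rw [intervalIntegral.integral_congr hcong]
      have hF : ∀ a : ℝ, HasDerivAt (fun a => (r + β 0 * a) ^ (n+1) / (β 0 * (n+1)) * C)
          ((r + β 0 * a) ^ n * C) a := by
        intro a
        have h1 : HasDerivAt (fun a : ℝ => r + β 0 * a) (β 0) a := by
          simpa using ((hasDerivAt_id a).const_mul (β 0)).const_add r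
        have h3 := ((h1.pow (n+1)).div_const (β 0 * (n+1))).mul_const C
        refine h3.congr_deriv ?_
        have hb := (hβ 0).ne'
        have hn1 : ((n:ℝ)+1) ≠ 0 := by positivity
        simp only [Nat.add_sub_cancel]
        push_cast
        field_simp
      rw [intervalIntegral.integral_eq_sub_of_hasDerivAt (fun a _ => hF a)
        ((by fun_prop : Continuous fun a : ℝ => (r + β 0 * a) ^ n * C).intervalIntegrable _ _)]
      have hz : r + β 0 * l = 0 := by
        rw [hldef, mul_neg, ← mul_div_assoc, mul_div_cancel_left₀ r (hβ 0).ne']; ring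
      rw [hz]
      simp [zero_pow (Nat.succ_ne_zero n)]
    have hI2 : (∫ a in (0:ℝ)..m, (r - g 0 a) ^ n * C) = r ^ (n+1) / (α 0 * (n+1)) * C := by
      have hcong : Set.EqOn (fun a => (r - g 0 a) ^ n * C) (fun a => (r - α 0 * a) ^ n * C)
          (Set.uIcc 0 m) := by
        intro a ha
        rw [Set.uIcc_of_le h0m] at ha
        have h2 : 0 ≤ a := ha.1
        have hge : g 0 a = α 0 * a := max_eq_left (by nlinarith [hα 0, hβ 0])
        simp only [hge]
      rw [intervalIntegral.integral_congr hcong]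
      have hF : ∀ a : ℝ, HasDerivAt (fun a => -((r - α 0 * a) ^ (n+1)) / (α 0 * (n+1)) * C)
          ((r - α 0 * a) ^ n * C) a := by
        intro a
        have h1 : HasDerivAt (fun a : ℝ => r - α 0 * a) (-(α 0)) a := by
          simpa using ((hasDerivAt_id a).const_mul (α 0)).const_sub r
        have h3 := (((h1.pow (n+1)).neg).div_const (α 0 * (n+1))).mul_const C
        refine h3.congr_deriv ?_
        have hb := (hα 0).ne'
        have hn1 : ((n:ℝ)+1) ≠ 0 := by positivity
        simp only [Nat.add_sub_cancel]
        push_cast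
        field_simp
      rw [intervalIntegral.integral_eq_sub_of_hasDerivAt (fun a _ => hF a)
        ((by fun_prop : Continuous fun a : ℝ => (r - α 0 * a) ^ n * C).intervalIntegrable _ _)]
      have hz : r - α 0 * m = 0 := by
        rw [hmdef, ← mul_div_assoc, mul_div_cancel_left₀ r (hα 0).ne']; ring
      rw [hz]
      simp [zero_pow (Nat.succ_ne_zero n), hC, one_div]
      ring
    rw [hIcc, hsplit, hI1, hI2]
    congr 1
    rw [Fin.prod_univ_succ, hC]
    have ha0 := (hα 0).ne'
    have hb0 := (hβ 0).ne'
    have hn1 : ((n:ℝ)+1) ≠ 0 := by positivity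
    have hnf : ((n.factorial : ℝ)) ≠ 0 := Nat.cast_ne_zero.2 n.factorial_ne_zero
    rw [Nat.factorial_succ]
    push_cast
    field_simp
    ring

/-- dual volume of a parallelotope. -/
theorem dual_volume_parallelotope (d : ℕ)
    (p v : Fin d → (Fin d → ℝ))
    (hli : LinearIndependent ℝ p)
    (hspan : Submodule.span ℝ (Set.range p) = ⊤)
    (hdual : ∀ i j, (∑ k, p i k * v j k) = if i = j then (1:ℝ) else 0)
    (x : Fin d → ℝ) (hx : ∀ i, 0 < x i)
    (P : Set (Fin d → ℝ))
    (hP : P = {w | ∃ t : Fin d → ℝ,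
      (∀ i, t i ∈ Set.Icc (-(1/2) : ℝ) (1/2)) ∧ w = ∑ i, (x i * t i) • p i})
    (z : Fin d → ℝ) (hz : ∀ i, |∑ k, z k * v i k| < x i / 2) :
    (d.factorial : ℝ) * (volume (polarDual ((fun y => y - z) '' P))).toReal =
      |(Matrix.of fun (i : Fin d) (j : Fin d) => v j i).det| * (∏ i, x i) /
        ∏ i, ((x i) ^ 2 / 4 - (∑ k, z k * v i k) ^ 2) := by
  classical
  set c : Fin d → ℝ := fun i => ∑ k, z k * v i k with hc
  set M : Matrix (Fin d) (Fin d) ℝ := Matrix.of (fun i k => p i k) with hM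
  set N : Matrix (Fin d) (Fin d) ℝ := Matrix.of (fun i j => v j i) with hN
  have hMN : M * N = 1 := by
    ext i j
    rw [Matrix.mul_apply, Matrix.one_apply]
    simpa [hM, hN] using hdual i j
  have hNM : N * M = 1 := mul_eq_one_comm.1 hMN
  have hdet1 : M.det * N.det = 1 := by rw [← Matrix.det_mul, hMN, Matrix.det_one]
  have hMdet : M.det ≠ 0 := left_ne_zero_of_mul_eq_one hdet1
  have hcbound : ∀ i, |c i| < x i / 2 := hz
  have hαpos : ∀ i, 0 < x i / 2 + c i := fun i => by
    have := abs_lt.1 (hcbound i); linarith [this.1]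
  have hβpos : ∀ i, 0 < x i / 2 - c i := fun i => by
    have := abs_lt.1 (hcbound i); linarith [this.2]
  set K : Set (Fin d → ℝ) :=
    {u | ∑ i, max ((x i / 2 + c i) * u i) (-((x i / 2 - c i) * u i)) ≤ 1} with hK
  have hzrep : ∀ k, z k = ∑ i, c i * p i k := by
    intro k
    calc z k = ∑ j, z j * (1 : Matrix (Fin d) (Fin d) ℝ) j k := by
          simp [Matrix.one_apply]
      _ = ∑ j, z j * (N * M) j k := by rw [hNM]
      _ = ∑ j, z j * ∑ i, v i j * p i k := by
          refine Finset.sum_congr rfl fun j _ => ?_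
          rw [Matrix.mul_apply]
          simp [hN, hM]
      _ = ∑ i, c i * p i k := by
          simp_rw [Finset.mul_sum]
          rw [Finset.sum_comm]
          refine Finset.sum_congr rfl fun i _ => ?_
          rw [hc, Finset.sum_mul]
          exact Finset.sum_congr rfl fun j _ => by ring
  have hu : ∀ (w : Fin d → ℝ) (i : Fin d), Matrix.toLin' M w i = ∑ k, p i k * w k := by
    intro w i
    rw [Matrix.toLin'_apply]
    simp [Matrix.mulVec, dotProduct, hM]
  have hpair : ∀ (w t : Fin d → ℝ),
      (∑ k, w k * ((∑ i, (x i * t i) • p i) k - z k))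
        = ∑ i, (x i * t i - c i) * (Matrix.toLin' M w) i := by
    intro w t
    simp_rw [hu, Finset.sum_apply, Pi.smul_apply, smul_eq_mul, hzrep, ← Finset.sum_sub_distrib,
      Finset.mul_sum]
    rw [Finset.sum_comm]
    refine Finset.sum_congr rfl fun i _ => ?_
    exact Finset.sum_congr rfl fun k _ => by ring
  have hset : polarDual ((fun y => y - z) '' P) = Matrix.toLin' M ⁻¹' K := by
    ext w
    simp only [polarDual, Set.mem_setOf_eq, Set.forall_mem_image, Set.mem_preimage, hK]
    constructor
    · intro h
      set t : Fin d → ℝ := fun i => if 0 ≤ Matrix.toLin' M w i then -(1/2 : ℝ) else 1/2 with ht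
      have htIcc : ∀ i, t i ∈ Set.Icc (-(1/2) : ℝ) (1/2) := by
        intro i; rw [ht]; dsimp only; split <;> constructor <;> norm_num
      have hmem : (∑ i, (x i * t i) • p i) ∈ P := by
        rw [hP]; exact ⟨t, htIcc, rfl⟩
      have h2 := h hmem
      simp only [Pi.sub_apply] at h2
      rw [hpair] at h2
      have heq : ∑ i, (x i * t i - c i) * (Matrix.toLin' M w) i
          = -∑ i, max ((x i / 2 + c i) * (Matrix.toLin' M w) i)
              (-((x i / 2 - c i) * (Matrix.toLin' M w) i)) := by
        rw [← Finset.sum_neg_distrib]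
        refine Finset.sum_congr rfl fun i _ => ?_
        by_cases hui : 0 ≤ Matrix.toLin' M w i
        · rw [ht]
          dsimp only
          rw [if_pos hui, max_eq_left (by nlinarith [hαpos i, hβpos i])]
          ring
        · have hui' : Matrix.toLin' M w i < 0 := not_le.1 hui
          rw [ht]
          dsimp only
          rw [if_neg hui, max_eq_right (by nlinarith [hαpos i, hβpos i])]
          ring
      rw [heq] at h2
      linarith [h2]
    · intro h y hy
      rw [hP] at hy
      obtain ⟨t, htIcc, rfl⟩ := hy
      simp only [Pi.sub_apply]
      rw [ge_iff_le, hpair]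
      have hlb : ∀ i ∈ Finset.univ,
          -(max ((x i / 2 + c i) * (Matrix.toLin' M w) i)
              (-((x i / 2 - c i) * (Matrix.toLin' M w) i)))
            ≤ (x i * t i - c i) * (Matrix.toLin' M w) i := by
        intro i _
        rcases le_or_gt 0 (Matrix.toLin' M w i) with hui | hui
        · refine le_trans (neg_le_neg (le_max_left _ _)) ?_
          nlinarith [(htIcc i).1, hx i, mul_nonneg
            (show (0:ℝ) ≤ x i * t i + x i / 2 by nlinarith [(htIcc i).1, hx i]) hui]
        · refine le_trans (neg_le_neg (le_max_right _ _)) ?_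
          nlinarith [(htIcc i).2, hx i, mul_nonneg
            (show (0:ℝ) ≤ x i / 2 - x i * t i by nlinarith [(htIcc i).2, hx i])
            (neg_nonneg.2 hui.le)]
      have := Finset.sum_le_sum hlb
      rw [Finset.sum_neg_distrib] at this
      linarith [this, h]
  rw [hset]
  have hdetA : LinearMap.det (Matrix.toLin' M) ≠ 0 := by
    rw [LinearMap.det_toLin']; exact hMdet
  rw [Measure.addHaar_preimage_linearMap (volume : Measure (Fin d → ℝ)) hdetA]
  rw [crossVol d (fun i => x i / 2 + c i) (fun i => x i / 2 - c i) hαpos hβpos 1 zero_le_one]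
  have hprodpos : ∀ i, 0 < x i ^ 2 / 4 - c i ^ 2 := by
    intro i; nlinarith [hαpos i, hβpos i]
  have hγ : ∀ i : Fin d, 1 / (x i / 2 + c i) + 1 / (x i / 2 - c i)
      = x i / (x i ^ 2 / 4 - c i ^ 2) := by
    intro i
    rw [div_add_div _ _ (hαpos i).ne' (hβpos i).ne']
    rw [show (x i / 2 + c i) * (x i / 2 - c i) = x i ^ 2 / 4 - c i ^ 2 by ring]
    congr 1
    ring
  have hprodγ : (∏ i, (1 / (x i / 2 + c i) + 1 / (x i / 2 - c i)))
      = (∏ i, x i) / ∏ i, (x i ^ 2 / 4 - c i ^ 2) := by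
    rw [← Finset.prod_div_distrib]
    exact Finset.prod_congr rfl fun i _ => hγ i
  have hNdet : (M.det)⁻¹ = N.det := (eq_inv_of_mul_eq_one_left (by rw [mul_comm]; exact hdet1)).symm
  have hγnn : (0:ℝ) ≤ (∏ i, (1 / (x i / 2 + c i) + 1 / (x i / 2 - c i))) / (d.factorial : ℝ) := by
    apply div_nonneg _ (Nat.cast_nonneg _)
    exact Finset.prod_nonneg fun i _ => by have := hαpos i; have := hβpos i; positivity
  rw [← ENNReal.ofReal_mul (abs_nonneg _), ENNReal.toReal_ofReal
    (mul_nonneg (abs_nonneg _) (by positivity))]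
  rw [show LinearMap.det (Matrix.toLin' M) = M.det from LinearMap.det_toLin' M, hNdet]
  rw [one_pow, one_mul, hprodγ]
  have hfne : ((d.factorial : ℝ)) ≠ 0 := Nat.cast_ne_zero.2 d.factorial_ne_zero
  have hpne : (∏ i, (x i ^ 2 / 4 - c i ^ 2)) ≠ 0 :=
    (Finset.prod_pos fun i _ => hprodpos i).ne'
  have hden : (∏ i, ((x i)^2/4 - (∑ k, z k * v i k)^2)) = ∏ i, ((x i)^2/4 - c i^2) := by
    simp only [hc]
  rw [hden]
  have hfin : ∀ A B R : ℝ, B ≠ 0 →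
      (d.factorial : ℝ) * (R * (A / B / (d.factorial : ℝ))) = (R * A) / B := by
    intro A B R hB
    field_simp
  exact hfin _ _ _ hpne
end

section
/- Let B be a plane binary tree on [n] = {1,…,n}. For each vertex m of B other than the root, let 1_{D_B(m)} ∈ ℝ^n denote the indicator vector of the set D_B(m) of descendants of m (including m). Then the n × n matrix whose rows are the n−1 vectors 1_{D_B(m)} (m ranging over the non-root vertices of B) together with the all-ones vector 𝟙 ∈ ℝ^n has determinant equal to 1 or −1. -/
/-- A plane binary tree on `[n]` with its in-order labeling, encoded by the
function `D` sending each vertex `m` to the set of its descendants (including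
`m` itself).  The descendant sets of a plane binary tree are exactly the
families of intervals satisfying the axioms below. -/
def IsPlaneBinaryTree (n : ℕ) (D : Fin n → Finset (Fin n)) : Prop :=
  (∀ m, m ∈ D m) ∧
  (∀ m, ∀ i ∈ D m, ∀ j ∈ D m, ∀ k, i ≤ k → k ≤ j → k ∈ D m) ∧
  (∃ rt, D rt = Finset.univ) ∧
  (∀ m m', m' ∈ D m → D m' ⊆ D m) ∧
  (∀ m m', D m ⊆ D m' ∨ D m' ⊆ D m ∨ Disjoint (D m) (D m')) ∧
  (∀ m, ((D m).filter (fun k => k < m)).Nonempty →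
    ∃ m', D m' = (D m).filter (fun k => k < m)) ∧
  (∀ m, ((D m).filter (fun k => m < k)).Nonempty →
    ∃ m', D m' = (D m).filter (fun k => m < k))

/-- the matrix whose rows are the indicator vectors of the
descendant sets of a plane binary tree (the row of the root being the
all-ones vector) has determinant `±1`. -/
theorem plane_binary_tree_determinant (n : ℕ)
    (D : Fin n → Finset (Fin n)) (hD : IsPlaneBinaryTree n D) :
    (Matrix.of fun (m k : Fin n) => if k ∈ D m then (1:ℝ) else 0).det = 1 ∨
    (Matrix.of fun (m k : Fin n) => if k ∈ D m then (1:ℝ) else 0).det = -1 := by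
  obtain ⟨h1, h2, -, h4, -, h6, h7⟩ := hD
  -- D is injective
  have key : ∀ m m' : Fin n, m < m' → D m = D m' → False := by
    intro m m' hlt heq
    have hm' : m' ∈ (D m).filter (fun k => m < k) := by
      simp [Finset.mem_filter, heq ▸ h1 m', hlt]
    obtain ⟨b, hb⟩ := h7 m ⟨m', hm'⟩
    have hsub : D m' ⊆ D b := h4 b m' (hb ▸ hm')
    have : m ∈ D b := hsub (heq ▸ h1 m)
    rw [hb, Finset.mem_filter] at this
    exact lt_irrefl m this.2
  have hinj : Function.Injective D := by
    intro a b hab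
    rcases lt_trichotomy a b with h | h | h
    · exact absurd (key a b h hab) id
    · exact h
    · exact absurd (key b a h hab.symm) id
  set A : Matrix (Fin n) (Fin n) ℤ := Matrix.of fun m k => if k ∈ D m then 1 else 0 with hA
  set M : Matrix (Fin n) (Fin n) ℤ := Matrix.of fun m m' =>
    (if m' = m then 1 else 0)
    - (if D m' = (D m).filter (fun k => k < m) then 1 else 0)
    - (if D m' = (D m).filter (fun k => m < k) then 1 else 0) with hM
  -- helper: sum over m' of [D m' = S]·[k ∈ D m'] = [k ∈ S] whenever S nonempty → ∃ l, D l = S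
  have hsum : ∀ (S : Finset (Fin n)) (k : Fin n), (S.Nonempty → ∃ l, D l = S) →
      (∑ m' : Fin n, (if D m' = S then (1:ℤ) else 0) * (if k ∈ D m' then 1 else 0))
        = if k ∈ S then 1 else 0 := by
    intro S k hS
    by_cases hex : ∃ l, D l = S
    · obtain ⟨l, hl⟩ := hex
      have : ∀ m' : Fin n,
          (if D m' = S then (1:ℤ) else 0) * (if k ∈ D m' then 1 else 0)
            = if m' = l then (if k ∈ S then 1 else 0) else 0 := by
        intro m'
        by_cases h : m' = l
        · subst h; simp [hl]
        · have : D m' ≠ S := fun hc => h (hinj (hc.trans hl.symm))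
          simp [this, h]
      rw [Finset.sum_congr rfl (fun m' _ => this m')]
      simp
    · have hSempty : ¬ S.Nonempty := fun h => hex (hS h)
      have hk : k ∉ S := fun h => hSempty ⟨k, h⟩
      have : ∀ m' : Fin n,
          (if D m' = S then (1:ℤ) else 0) * (if k ∈ D m' then 1 else 0) = 0 := by
        intro m'
        have : D m' ≠ S := fun hc => hex ⟨m', hc⟩
        simp [this]
      rw [Finset.sum_congr rfl (fun m' _ => this m')]
      simp [hk]
  have hMA : M * A = 1 := by
    ext m k
    rw [Matrix.mul_apply]
    have expand : ∀ m' : Fin n, M m m' * A m' k =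
        (if m' = m then (1:ℤ) else 0) * (if k ∈ D m' then 1 else 0)
        - (if D m' = (D m).filter (fun j => j < m) then (1:ℤ) else 0) * (if k ∈ D m' then 1 else 0)
        - (if D m' = (D m).filter (fun j => m < j) then (1:ℤ) else 0) * (if k ∈ D m' then 1 else 0) := by
      intro m'
      simp only [hM, hA, Matrix.of_apply]
      ring
    rw [Finset.sum_congr rfl (fun m' _ => expand m')]
    rw [Finset.sum_sub_distrib, Finset.sum_sub_distrib]
    rw [hsum _ k (h6 m), hsum _ k (h7 m)]
    have t1 : (∑ m' : Fin n, (if m' = m then (1:ℤ) else 0) * (if k ∈ D m' then 1 else 0))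
        = if k ∈ D m then 1 else 0 := by
      rw [Finset.sum_eq_single m]
      · simp
      · intro b _ hb; simp [hb]
      · simp
    rw [t1]
    simp only [Matrix.one_apply, Finset.mem_filter]
    rcases lt_trichotomy k m with h | h | h
    · have hmk : m ≠ k := fun e => absurd (e ▸ h) (lt_irrefl _)
      by_cases hk : k ∈ D m <;> simp [hk, h, hmk, not_lt_of_gt h]
    · subst h; simp [h1 k, lt_irrefl]
    · have hmk : m ≠ k := fun e => absurd (e ▸ h) (lt_irrefl _)
      by_cases hk : k ∈ D m <;> simp [hk, h, hmk, not_lt_of_gt h]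
  have hdet : M.det * A.det = 1 := by
    rw [← Matrix.det_mul, hMA, Matrix.det_one]
  have hu : A.det = 1 ∨ A.det = -1 := by
    have : IsUnit A.det := IsUnit.of_mul_eq_one _ (mul_comm M.det A.det ▸ hdet)
    exact Int.isUnit_iff.mp this
  have hcast : (Matrix.of fun (m k : Fin n) => if k ∈ D m then (1:ℝ) else 0)
      = A.map (Int.cast : ℤ → ℝ) := by
    ext m k
    simp [hA, Matrix.map, apply_ite (Int.cast : ℤ → ℝ)]
  have hdet2 : (A.map (Int.cast : ℤ → ℝ)).det = ((A.det : ℤ) : ℝ) :=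
    (RingHom.map_det (Int.castRingHom ℝ) A).symm
  rw [hcast, hdet2]
  rcases hu with h | h <;> [left; right] <;> rw [h] <;> norm_num
end
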